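/- arXiv:2403.02242 — 7 statements merged into one kernel-verified Lean document; each statement's English description precedes it below -/
import Mathlib

section
/- There is a bijection between the set of m×n partial alternating sign matrices and the set of (m+1)×(n+1) integer matrices whose first row and last column consist entirely of zeros and whose entries weakly increase, in increments of at most one at each step, from top to bottom along each column and from right to left along each row. -/
/-- An `m × n` partial alternating sign matrix, represented as a function
`ℕ → ℕ → ℤ` that vanishes outside the index range `[0, m) × [0, n)`
(0-based indices). -/
def IsPASM (m n : ℕ) (M : ℕ → ℕ → ℤ) : Prop :=
  -- normalization: zero outside the matrix
  (∀ i j, m ≤ i ∨ n ≤ j → M i j = 0) ∧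
  -- entries in {-1, 0, 1}
  (∀ i j, i < m → j < n → M i j = -1 ∨ M i j = 0 ∨ M i j = 1) ∧
  -- each row sums to 0 or 1
  (∀ i, i < m → (∑ j ∈ Finset.range n, M i j) = 0 ∨ (∑ j ∈ Finset.range n, M i j) = 1) ∧
  -- each column sums to 0 or 1
  (∀ j, j < n → (∑ i ∈ Finset.range m, M i j) = 0 ∨ (∑ i ∈ Finset.range m, M i j) = 1) ∧
  -- nonzero entries alternate in sign along each row
  (∀ i j₁ j₂, i < m → j₁ < j₂ → j₂ < n → M i j₁ ≠ 0 → M i j₂ ≠ 0 →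
    (∀ j, j₁ < j → j < j₂ → M i j = 0) → M i j₂ = -M i j₁) ∧
  -- nonzero entries alternate in sign along each column
  (∀ j i₁ i₂, j < n → i₁ < i₂ → i₂ < m → M i₁ j ≠ 0 → M i₂ j ≠ 0 →
    (∀ i, i₁ < i → i < i₂ → M i j = 0) → M i₂ j = -M i₁ j) ∧
  -- the first nonzero entry (if any) of each column is 1
  (∀ i j, i < m → j < n → M i j ≠ 0 → (∀ i', i' < i → M i' j = 0) → M i j = 1) ∧
  -- the last nonzero entry (if any) of each row is 1
  (∀ i j, i < m → j < n → M i j ≠ 0 → (∀ j', j < j' → j' < n → M i j' = 0) → M i j = 1)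

/-- The set of `(m+1) × (n+1)` integer matrices whose first row and last column
are all zeros and whose entries weakly increase, in increments of at most one,
from top to bottom along each column and from right to left along each row.
(Represented as functions `ℕ → ℕ → ℤ` vanishing outside `[0,m] × [0,n]`.) -/
def IsCSM (m n : ℕ) (c : ℕ → ℕ → ℤ) : Prop :=
  -- normalization: zero outside the matrix
  (∀ i j, m < i ∨ n < j → c i j = 0) ∧
  -- first row is zero
  (∀ j, j ≤ n → c 0 j = 0) ∧
  -- last column is zero
  (∀ i, i ≤ m → c i n = 0) ∧
  -- entries weakly increase top to bottom, in increments of at most one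
  (∀ i j, i < m → j ≤ n → c i j ≤ c (i+1) j ∧ c (i+1) j ≤ c i j + 1) ∧
  -- entries weakly increase right to left, in increments of at most one
  (∀ i j, i ≤ m → j < n → c i (j+1) ≤ c i j ∧ c i j ≤ c i (j+1) + 1)

/-- Telescoping sum over an `Ico` interval. -/
lemma sum_Ico_telescope (g : ℕ → ℤ) {a b : ℕ} (hab : a ≤ b) :
    ∑ k ∈ Finset.Ico a b, (g k - g (k+1)) = g a - g b := by
  rw [Finset.sum_Ico_eq_sum_range]
  have h1 : ∀ k ∈ Finset.range (b - a), g (a + k) - g (a + k + 1)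
      = (fun k => g (a + k)) k - (fun k => g (a + k)) (k + 1) := by
    intro k _; simp [Nat.add_assoc]
  rw [Finset.sum_congr rfl h1, Finset.sum_range_sub' (fun k => g (a + k))]
  simp only [Nat.add_zero]
  congr 2
  omega

/-- If a function is locally constant on a range, it is constant there. -/
lemma constChain (g : ℕ → ℤ) (a b : ℕ) (h : ∀ k, a ≤ k → k < b → g k = g (k+1)) :
    ∀ k, a ≤ k → k ≤ b → g a = g k := by
  intro k
  induction k with
  | zero =>
    intro h1 _
    have : a = 0 := by omega
    rw [this]
  | succ k ih =>
    intro h1 h2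
    rcases Nat.lt_or_ge a (k+1) with hlt | hge
    · have hak : a ≤ k := by omega
      rw [ih hak (by omega), h k hak (by omega)]
    · have : a = k + 1 := by omega
      rw [this]

/-- Tail sums of each row of a PASM lie in {0,1}. -/
lemma pasm_tail (m n : ℕ) (M : ℕ → ℕ → ℤ) (h : IsPASM m n M) (i : ℕ) (him : i < m) :
    ∀ j, (∑ j' ∈ Finset.Ico j n, M i j') = 0 ∨ (∑ j' ∈ Finset.Ico j n, M i j') = 1 := by
  obtain ⟨hz, hval, _, _, haltr, _, _, hlast⟩ := h
  -- existence of a first nonzero entry in [j, n) (if any nonzero)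
  have exFirst : ∀ d j, n - j ≤ d →
      (∀ k, j ≤ k → k < n → M i k = 0) ∨
      ∃ j₀, j ≤ j₀ ∧ j₀ < n ∧ M i j₀ ≠ 0 ∧ ∀ k, j ≤ k → k < j₀ → M i k = 0 := by
    intro d
    induction d with
    | zero => intro j hj; left; intro k hk1 hk2; omega
    | succ d ih =>
      intro j hj
      rcases le_or_gt n j with hn | hn
      · left; intro k hk1 hk2; omega
      by_cases h0 : M i j = 0
      · rcases ih (j+1) (by omega) with hall | ⟨j₀, h1, h2, h3, h4⟩
        · left; intro k hk1 hk2
          rcases Nat.eq_or_lt_of_le hk1 with rfl | hlt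
          · exact h0
          · exact hall k (by omega) hk2
        · right; exact ⟨j₀, by omega, h2, h3, fun k hk1 hk2 => by
            rcases Nat.eq_or_lt_of_le hk1 with rfl | hlt
            · exact h0
            · exact h4 k (by omega) hk2⟩
      · right; exact ⟨j, le_refl _, hn, h0, fun k hk1 hk2 => by omega⟩
  have key : ∀ d j, n - j ≤ d →
      ((∑ j' ∈ Finset.Ico j n, M i j') = 0 ∧
        ∀ j₀, j ≤ j₀ → j₀ < n → M i j₀ ≠ 0 →
          (∀ k, j ≤ k → k < j₀ → M i k = 0) → M i j₀ = -1) ∨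
      ((∑ j' ∈ Finset.Ico j n, M i j') = 1 ∧
        ∃ j₀, j ≤ j₀ ∧ j₀ < n ∧ M i j₀ = 1 ∧ ∀ k, j ≤ k → k < j₀ → M i k = 0) := by
    intro d
    induction d with
    | zero =>
      intro j hj
      left
      constructor
      · rw [Finset.Ico_eq_empty (by omega)]; simp
      · intro j₀ h1 h2; omega
    | succ d ih =>
      intro j hj
      rcases le_or_gt n j with hn | hn
      · left
        constructor
        · rw [Finset.Ico_eq_empty (by omega)]; simp
        · intro j₀ h1 h2; omega
      have hsplit : (∑ j' ∈ Finset.Ico j n, M i j')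
          = M i j + ∑ j' ∈ Finset.Ico (j+1) n, M i j' :=
        Finset.sum_eq_sum_Ico_succ_bot hn _
      have IH := ih (j+1) (by omega)
      rcases hval i j him hn with hv | hv | hv
      · -- M i j = -1 : the previous state must be "sum 1"
        rcases IH with ⟨hs, hprop⟩ | ⟨hs, _⟩
        · exfalso
          rcases exFirst (n - (j+1)) (j+1) (le_refl _) with hall | ⟨j₀, h1, h2, h3, h4⟩
          · have := hlast i j him hn (by rw [hv]; norm_num)
              (fun j' hj1 hj2 => hall j' (by omega) hj2)
            omega
          · have e1 : M i j₀ = -1 := hprop j₀ h1 h2 h3 h4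
            have e2 : M i j₀ = -M i j :=
              haltr i j j₀ him (by omega) h2 (by rw [hv]; norm_num) h3
                (fun k hk1 hk2 => h4 k (by omega) hk2)
            omega
        · left
          constructor
          · omega
          · intro j₀ h1 h2 h3 h4
            rcases Nat.eq_or_lt_of_le h1 with rfl | hlt
            · exact hv
            · exact absurd (h4 j (le_refl _) hlt) (by rw [hv]; norm_num)
      · -- M i j = 0
        rcases IH with ⟨hs, hprop⟩ | ⟨hs, j₀, h1, h2, h3, h4⟩
        · left
          constructor
          · omega
          · intro j₀ h1 h2 h3 h4
            have hne : j < j₀ := by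
              rcases Nat.eq_or_lt_of_le h1 with rfl | hlt
              · exact absurd hv h3
              · exact hlt
            exact hprop j₀ (by omega) h2 h3 (fun k hk1 hk2 => h4 k (by omega) hk2)
        · right
          constructor
          · omega
          · refine ⟨j₀, by omega, h2, h3, fun k hk1 hk2 => ?_⟩
            rcases Nat.eq_or_lt_of_le hk1 with rfl | hlt
            · exact hv
            · exact h4 k (by omega) hk2
      · -- M i j = 1 : the previous state must be "sum 0"
        rcases IH with ⟨hs, _⟩ | ⟨hs, j₀, h1, h2, h3, h4⟩
        · right
          constructor
          · omega
          · exact ⟨j, le_refl _, hn, hv, fun k hk1 hk2 => by omega⟩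
        · exfalso
          have e2 : M i j₀ = -M i j :=
            haltr i j j₀ him (by omega) h2 (by rw [hv]; norm_num) (by rw [h3]; norm_num)
              (fun k hk1 hk2 => h4 k (by omega) hk2)
          omega
  intro j
  rcases key (n - j) j (le_refl _) with ⟨hs, _⟩ | ⟨hs, _⟩
  · left; exact hs
  · right; exact hs

/-- Partial column sums (from the top) of a PASM lie in {0,1}. -/
lemma pasm_head (m n : ℕ) (M : ℕ → ℕ → ℤ) (h : IsPASM m n M) (j : ℕ) (hjn : j < n) :
    ∀ i, (∑ i' ∈ Finset.range i, M i' j) = 0 ∨ (∑ i' ∈ Finset.range i, M i' j) = 1 := by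
  obtain ⟨hz, hval, _, _, _, haltc, hfirst, _⟩ := h
  have exLast : ∀ i, (∀ k, k < i → M k j = 0) ∨
      ∃ i₀, i₀ < i ∧ M i₀ j ≠ 0 ∧ ∀ k, i₀ < k → k < i → M k j = 0 := by
    intro i
    induction i with
    | zero => left; intro k hk; omega
    | succ i ih =>
      by_cases h0 : M i j = 0
      · rcases ih with hall | ⟨i₀, h1, h2, h3⟩
        · left; intro k hk
          rcases Nat.lt_succ_iff_lt_or_eq.mp hk with hlt | rfl
          · exact hall k hlt
          · exact h0
        · right; exact ⟨i₀, by omega, h2, fun k hk1 hk2 => by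
            rcases Nat.lt_succ_iff_lt_or_eq.mp hk2 with hlt | rfl
            · exact h3 k hk1 hlt
            · exact h0⟩
      · right; exact ⟨i, by omega, h0, fun k hk1 hk2 => by omega⟩
  have key : ∀ i,
      ((∑ i' ∈ Finset.range i, M i' j) = 0 ∧
        ∀ i₀, i₀ < i → M i₀ j ≠ 0 → (∀ k, i₀ < k → k < i → M k j = 0) → M i₀ j = -1) ∨
      ((∑ i' ∈ Finset.range i, M i' j) = 1 ∧
        ∃ i₀, i₀ < i ∧ M i₀ j = 1 ∧ ∀ k, i₀ < k → k < i → M k j = 0) := by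
    intro i
    induction i with
    | zero =>
      left
      constructor
      · simp
      · intro i₀ h1; omega
    | succ i ih =>
      have hsplit : (∑ i' ∈ Finset.range (i+1), M i' j)
          = (∑ i' ∈ Finset.range i, M i' j) + M i j := Finset.sum_range_succ _ _
      have hmem : M i j = -1 ∨ M i j = 0 ∨ M i j = 1 := by
        rcases Nat.lt_or_ge i m with him | him
        · exact hval i j him hjn
        · right; left; exact hz i j (Or.inl him)
      rcases hmem with hv | hv | hv
      · -- M i j = -1 : i < m, previous state must be "sum 1"
        have him : i < m := by
          by_contra hc
          exact absurd (hz i j (Or.inl (by omega))) (by rw [hv]; norm_num)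
        rcases ih with ⟨hs, hprop⟩ | ⟨hs, _⟩
        · exfalso
          rcases exLast i with hall | ⟨i₀, h1, h2, h3⟩
          · have := hfirst i j him hjn (by rw [hv]; norm_num) hall
            omega
          · have e1 : M i₀ j = -1 := hprop i₀ h1 h2 h3
            have e2 : M i j = -M i₀ j :=
              haltc j i₀ i hjn h1 him h2 (by rw [hv]; norm_num) h3
            omega
        · left
          constructor
          · omega
          · intro i₀ h1 h2 h3
            rcases Nat.lt_succ_iff_lt_or_eq.mp h1 with hlt | rfl
            · exact absurd (h3 i hlt (by omega)) (by rw [hv]; norm_num)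
            · exact hv
      · -- M i j = 0
        rcases ih with ⟨hs, hprop⟩ | ⟨hs, i₀, h1, h2, h3⟩
        · left
          constructor
          · omega
          · intro i₀ h1 h2 h3
            rcases Nat.lt_succ_iff_lt_or_eq.mp h1 with hlt | rfl
            · exact hprop i₀ hlt h2 (fun k hk1 hk2 => h3 k hk1 (by omega))
            · exact absurd hv h2
        · right
          constructor
          · omega
          · refine ⟨i₀, by omega, h2, fun k hk1 hk2 => ?_⟩
            rcases Nat.lt_succ_iff_lt_or_eq.mp hk2 with hlt | rfl
            · exact h3 k hk1 hlt
            · exact hv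
      · -- M i j = 1 : i < m, previous state must be "sum 0"
        have him : i < m := by
          by_contra hc
          exact absurd (hz i j (Or.inl (by omega))) (by rw [hv]; norm_num)
        rcases ih with ⟨hs, _⟩ | ⟨hs, i₀, h1, h2, h3⟩
        · right
          constructor
          · omega
          · exact ⟨i, by omega, hv, fun k hk1 hk2 => by omega⟩
        · exfalso
          have e2 : M i j = -M i₀ j :=
            haltc j i₀ i hjn h1 him (by rw [h2]; norm_num) (by rw [hv]; norm_num) h3
          omega
  intro i
  rcases key i with ⟨hs, _⟩ | ⟨hs, _⟩
  · left; exact hs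
  · right; exact hs

/-- The corner-sum map. -/
def fmap (m n : ℕ) (M : ℕ → ℕ → ℤ) : ℕ → ℕ → ℤ :=
  fun i j => if i ≤ m ∧ j ≤ n then ∑ i' ∈ Finset.range i, ∑ j' ∈ Finset.Ico j n, M i' j' else 0

/-- The inverse (double difference) map. -/
def gmap (m n : ℕ) (c : ℕ → ℕ → ℤ) : ℕ → ℕ → ℤ :=
  fun i j => if i < m ∧ j < n then c (i+1) j - c (i+1) (j+1) - c i j + c i (j+1) else 0

lemma fmap_col_diff (m n : ℕ) (M : ℕ → ℕ → ℤ) {i j : ℕ} (hi : i < m) (hj : j ≤ n) :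
    fmap m n M (i+1) j - fmap m n M i j = ∑ j' ∈ Finset.Ico j n, M i j' := by
  rw [fmap, if_pos ⟨by omega, hj⟩]
  rw [fmap, if_pos ⟨by omega, hj⟩]
  rw [Finset.sum_range_succ]
  ring

lemma fmap_entry (m n : ℕ) (M : ℕ → ℕ → ℤ) {i j : ℕ} (hi : i < m) (hj : j < n) :
    M i j = (fmap m n M (i+1) j - fmap m n M i j)
      - (fmap m n M (i+1) (j+1) - fmap m n M i (j+1)) := by
  rw [fmap_col_diff m n M hi (by omega), fmap_col_diff m n M hi (by omega)]
  rw [Finset.sum_eq_sum_Ico_succ_bot hj]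
  ring

private theorem pasm_bijects_with_cornersum_aux (m n : ℕ) :
    ∃ f : (ℕ → ℕ → ℤ) → (ℕ → ℕ → ℤ),
      Set.BijOn f {M | IsPASM m n M} {c | IsCSM m n c} := by
  refine ⟨fmap m n, ?_, ?_, ?_⟩
  · -- MapsTo
    intro M hM
    obtain ⟨hz, hval, hrow, hcol, haltr, haltc, hfirst, hlast⟩ := hM
    have hM' : IsPASM m n M := ⟨hz, hval, hrow, hcol, haltr, haltc, hfirst, hlast⟩
    refine ⟨?_, ?_, ?_, ?_, ?_⟩
    · intro i j hij
      rw [fmap, if_neg (by omega)]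
    · intro j hj
      rw [fmap, if_pos ⟨by omega, hj⟩]
      simp
    · intro i hi
      rw [fmap, if_pos ⟨hi, le_refl _⟩]
      simp
    · intro i j hi hj
      have hd := fmap_col_diff m n M hi hj
      rcases pasm_tail m n M hM' i hi j with h0 | h1 <;> constructor <;> omega
    · intro i j hi hj
      have hd1 := fmap_col_diff m n M (i := i) (j := j)
      have heq : fmap m n M i j - fmap m n M i (j+1) = ∑ i' ∈ Finset.range i, M i' j := by
        rw [fmap, if_pos ⟨hi, by omega⟩, fmap, if_pos ⟨hi, by omega⟩]
        rw [← Finset.sum_sub_distrib]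
        refine Finset.sum_congr rfl (fun i' _ => ?_)
        rw [Finset.sum_eq_sum_Ico_succ_bot hj]
        ring
      rcases pasm_head m n M hM' j hj i with h0 | h1 <;> constructor <;> omega
  · -- InjOn
    intro M hM M' hM' heq
    funext i j
    by_cases hij : i < m ∧ j < n
    · rw [fmap_entry m n M hij.1 hij.2, fmap_entry m n M' hij.1 hij.2, heq]
    · rw [hM.1 i j (by omega), hM'.1 i j (by omega)]
  · -- SurjOn
    intro c hc
    obtain ⟨hz, hr0, hcn, hcolm, hrowm⟩ := hc
    have ha : ∀ i j, i ≤ m → j < n →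
        c i j - c i (j+1) = 0 ∨ c i j - c i (j+1) = 1 := by
      intro i j hi hj
      have := hrowm i j hi hj; omega
    have hb : ∀ i j, i < m → j ≤ n →
        c (i+1) j - c i j = 0 ∨ c (i+1) j - c i j = 1 := by
      intro i j hi hj
      have := hcolm i j hi hj; omega
    have hMb : ∀ i j, i < m → j < n →
        gmap m n c i j = (c (i+1) j - c i j) - (c (i+1) (j+1) - c i (j+1)) := by
      intro i j hi hj
      rw [gmap, if_pos ⟨hi, hj⟩]; ring
    have hMa : ∀ i j, i < m → j < n →
        gmap m n c i j = (c (i+1) j - c (i+1) (j+1)) - (c i j - c i (j+1)) := by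
      intro i j hi hj
      rw [gmap, if_pos ⟨hi, hj⟩]; ring
    refine ⟨gmap m n c, ?_, ?_⟩
    · -- gmap c is a PASM
      refine ⟨?_, ?_, ?_, ?_, ?_, ?_, ?_, ?_⟩
      · intro i j hij
        rw [gmap, if_neg (by omega)]
      · intro i j hi hj
        rw [hMb i j hi hj]
        rcases hb i j hi (by omega) with h1 | h1 <;>
          rcases hb i (j+1) hi (by omega) with h2 | h2 <;> omega
      · intro i hi
        have hsum : (∑ j ∈ Finset.range n, gmap m n c i j)
            = ∑ j ∈ Finset.range n,
              ((fun j => c (i+1) j - c i j) j - (fun j => c (i+1) j - c i j) (j+1)) := by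
          refine Finset.sum_congr rfl (fun j hj => ?_)
          rw [hMb i j hi (Finset.mem_range.mp hj)]
        rw [hsum, Finset.sum_range_sub' (fun j => c (i+1) j - c i j)]
        have h1 : c (i+1) n - c i n = 0 := by
          rw [hcn (i+1) (by omega), hcn i (by omega)]; ring
        have h2 := hb i 0 hi (by omega)
        omega
      · intro j hj
        have hsum : (∑ i ∈ Finset.range m, gmap m n c i j)
            = ∑ i ∈ Finset.range m,
              ((fun i => c i j - c i (j+1)) (i+1) - (fun i => c i j - c i (j+1)) i) := by
          refine Finset.sum_congr rfl (fun i hi => ?_)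
          rw [hMa i j (Finset.mem_range.mp hi) hj]
        rw [hsum, Finset.sum_range_sub (fun i => c i j - c i (j+1))]
        have h1 : c 0 j - c 0 (j+1) = 0 := by
          rw [hr0 j (by omega), hr0 (j+1) (by omega)]; ring
        have h2 := ha m j (le_refl _) hj
        omega
      · -- alternation along rows
        intro i j₁ j₂ hi h12 h2n hne1 hne2 hgap
        have hc1 : (fun j => c (i+1) j - c i j) (j₁+1) = (fun j => c (i+1) j - c i j) j₂ := by
          refine constChain (fun j => c (i+1) j - c i j) (j₁+1) j₂ ?_ j₂ (by omega) (le_refl _)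
          intro k hk1 hk2
          have h0 : gmap m n c i k = 0 := hgap k (by omega) hk2
          rw [hMb i k hi (by omega)] at h0
          omega
        simp only [] at hc1
        rw [hMb i j₁ hi (by omega)] at hne1 ⊢
        rw [hMb i j₂ hi h2n] at hne2 ⊢
        rcases hb i j₁ hi (by omega) with e1 | e1 <;>
          rcases hb i (j₁+1) hi (by omega) with e2 | e2 <;>
          rcases hb i j₂ hi (by omega) with e3 | e3 <;>
          rcases hb i (j₂+1) hi (by omega) with e4 | e4 <;> omega
      · -- alternation along columns
        intro j i₁ i₂ hj h12 h2m hne1 hne2 hgap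
        have hc1 : (fun i => c i j - c i (j+1)) (i₁+1) = (fun i => c i j - c i (j+1)) i₂ := by
          refine constChain (fun i => c i j - c i (j+1)) (i₁+1) i₂ ?_ i₂ (by omega) (le_refl _)
          intro k hk1 hk2
          have h0 : gmap m n c k j = 0 := hgap k (by omega) hk2
          rw [hMa k j (by omega) hj] at h0
          omega
        simp only [] at hc1
        rw [hMa i₁ j (by omega) hj] at hne1 ⊢
        rw [hMa i₂ j h2m hj] at hne2 ⊢
        rcases ha i₁ j (by omega) hj with e1 | e1 <;>
          rcases ha (i₁+1) j (by omega) hj with e2 | e2 <;>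
          rcases ha i₂ j (by omega) hj with e3 | e3 <;>
          rcases ha (i₂+1) j (by omega) hj with e4 | e4 <;> omega
      · -- first nonzero entry of a column is 1
        intro i j hi hj hne hzero
        have hc1 : (fun i => c i j - c i (j+1)) 0 = (fun i => c i j - c i (j+1)) i := by
          refine constChain (fun i => c i j - c i (j+1)) 0 i ?_ i (by omega) (le_refl _)
          intro k _ hk2
          have h0 : gmap m n c k j = 0 := hzero k hk2
          rw [hMa k j (by omega) hj] at h0
          omega
        simp only [] at hc1
        have h1 : c 0 j - c 0 (j+1) = 0 := by
          rw [hr0 j (by omega), hr0 (j+1) (by omega)]; ring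
        rw [hMa i j hi hj] at hne ⊢
        rcases ha (i+1) j (by omega) hj with e1 | e1 <;> omega
      · -- last nonzero entry of a row is 1
        intro i j hi hj hne hzero
        have hc1 : (fun j => c (i+1) j - c i j) (j+1) = (fun j => c (i+1) j - c i j) n := by
          refine constChain (fun j => c (i+1) j - c i j) (j+1) n ?_ n (by omega) (le_refl _)
          intro k hk1 hk2
          have h0 : gmap m n c i k = 0 := hzero k (by omega) hk2
          rw [hMb i k hi hk2] at h0
          omega
        simp only [] at hc1
        have h1 : c (i+1) n - c i n = 0 := by
          rw [hcn (i+1) (by omega), hcn i (by omega)]; ring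
        rw [hMb i j hi hj] at hne ⊢
        rcases hb i j hi (by omega) with e1 | e1 <;> omega
    · -- fmap (gmap c) = c
      funext i j
      by_cases hij : i ≤ m ∧ j ≤ n
      · rw [fmap, if_pos hij]
        have hinner : ∀ i' ∈ Finset.range i,
            (∑ j' ∈ Finset.Ico j n, gmap m n c i' j') = c (i'+1) j - c i' j := by
          intro i' hi'
          have hi'm : i' < m := by
            have := Finset.mem_range.mp hi'; omega
          have : (∑ j' ∈ Finset.Ico j n, gmap m n c i' j')
              = ∑ j' ∈ Finset.Ico j n,
                ((fun j' => c (i'+1) j' - c i' j') j' - (fun j' => c (i'+1) j' - c i' j') (j'+1)) := by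
            refine Finset.sum_congr rfl (fun j' hj' => ?_)
            have hj'n : j' < n := (Finset.mem_Ico.mp hj').2
            rw [hMb i' j' hi'm hj'n]
          rw [this, sum_Ico_telescope (fun j' => c (i'+1) j' - c i' j') hij.2]
          have h1 : c (i'+1) n = 0 := hcn (i'+1) (by omega)
          have h2 : c i' n = 0 := hcn i' (by omega)
          show c (i'+1) j - c i' j - (c (i'+1) n - c i' n) = c (i'+1) j - c i' j
          rw [h1, h2]; ring
        rw [Finset.sum_congr rfl hinner]
        have : (∑ i' ∈ Finset.range i, (c (i'+1) j - c i' j))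
            = ∑ i' ∈ Finset.range i,
              ((fun i' => c i' j) (i'+1) - (fun i' => c i' j) i') := rfl
        rw [this, Finset.sum_range_sub (fun i' => c i' j)]
        rw [hr0 j hij.2]
        ring
      · rw [fmap, if_neg hij, hz i j (by omega)]

/-- There is a bijection between the set of `m × n` partial
alternating sign matrices and the set of `(m+1) × (n+1)` integer matrices whose
first row and last column are zero and whose entries weakly increase, in
increments of at most one, from top to bottom and from right to left. -/
theorem pasm_bijects_with_cornersum (m n : ℕ) :
    ∃ f : (ℕ → ℕ → ℤ) → (ℕ → ℕ → ℤ),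
      Set.BijOn f {M | IsPASM m n M} {c | IsCSM m n c} := by
  exact pasm_bijects_with_cornersum_aux m n
end

section
/- There is a bijection between the set of m×n partial alternating sign matrices and the set of (m,n)-partial height-function matrices. -/
/-- An `(m,n)`-partial height-function matrix: an `(m+1) × (n+1)` matrix
`(h i j)_{0 ≤ i ≤ m, 0 ≤ j ≤ n}` of nonnegative integers with `h 0 k = k`,
`h ℓ 0 = ℓ`, and any two horizontally or vertically adjacent entries
differing by exactly 1.  (Represented as a function `ℕ → ℕ → ℤ` vanishing
outside the index range.) -/
def IsPHF (m n : ℕ) (h : ℕ → ℕ → ℤ) : Prop :=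
  -- normalization: zero outside the matrix
  (∀ i j, m < i ∨ n < j → h i j = 0) ∧
  -- entries are nonnegative
  (∀ i j, i ≤ m → j ≤ n → 0 ≤ h i j) ∧
  -- first row: h 0 k = k
  (∀ k, k ≤ n → h 0 k = k) ∧
  -- first column: h ℓ 0 = ℓ
  (∀ l, l ≤ m → h l 0 = l) ∧
  -- vertically adjacent entries differ by exactly 1
  (∀ i j, i < m → j ≤ n → h (i+1) j = h i j + 1 ∨ h (i+1) j = h i j - 1) ∧
  -- horizontally adjacent entries differ by exactly 1
  (∀ i j, i ≤ m → j < n → h i (j+1) = h i j + 1 ∨ h i (j+1) = h i j - 1)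

namespace PASMBijAux

/-- Partial row sum, from column `j` (inclusive) to the right edge `n`. -/
def rsum (M : ℕ → ℕ → ℤ) (n i j : ℕ) : ℤ := ∑ b ∈ Finset.Ico j n, M i b

/-- Partial column sum, rows `0 ≤ a < i`. -/
def csum (M : ℕ → ℕ → ℤ) (j i : ℕ) : ℤ := ∑ a ∈ Finset.range i, M a j

/-- The height function attached to a PASM. -/
def toH (m n : ℕ) (M : ℕ → ℕ → ℤ) : ℕ → ℕ → ℤ := fun i j =>
  if i ≤ m ∧ j ≤ n then (i : ℤ) + (j : ℤ) - 2 * ∑ a ∈ Finset.range i, rsum M n a (n - j)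
  else 0

/-- The PASM attached to a height function. -/
def fromH (m n : ℕ) (h : ℕ → ℕ → ℤ) : ℕ → ℕ → ℤ := fun i j =>
  if i < m ∧ j < n then
    (h (i+1) (n-1-j) - h i (n-1-j) - (h (i+1) (n-j) - h i (n-j))) / 2
  else 0

lemma rsum_split (M : ℕ → ℕ → ℤ) {n j : ℕ} (i : ℕ) (hj : j < n) :
    rsum M n i j = M i j + rsum M n i (j+1) := by
  rw [rsum, Finset.sum_eq_sum_Ico_succ_bot hj, rsum]

lemma rsum_congr_zero {M : ℕ → ℕ → ℤ} {n : ℕ} (i : ℕ) {a b : ℕ} (hab : a ≤ b) (hbn : b ≤ n)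
    (hz : ∀ t, a ≤ t → t < b → M i t = 0) : rsum M n i a = rsum M n i b := by
  induction b with
  | zero => rw [show a = 0 from by omega]
  | succ b ih =>
    rcases Nat.eq_or_lt_of_le hab with he|hl
    · rw [he]
    · have h1 : rsum M n i b = M i b + rsum M n i (b+1) := rsum_split M i (by omega)
      rw [ih (by omega) (by omega) (fun t ht1 ht2 => hz t ht1 (by omega)), h1,
        hz b (by omega) (by omega), zero_add]

lemma csum_congr_zero {M : ℕ → ℕ → ℤ} {j a b : ℕ} (hab : a ≤ b)
    (hz : ∀ t, a ≤ t → t < b → M t j = 0) : csum M j b = csum M j a := by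
  induction b with
  | zero => rw [show a = 0 from by omega]
  | succ b ih =>
    rcases Nat.eq_or_lt_of_le hab with he|hl
    · rw [he]
    · rw [csum, Finset.sum_range_succ, ← csum,
        ih (by omega) (fun t ht1 ht2 => hz t ht1 (by omega)), hz b (by omega) (by omega),
        add_zero]

lemma vdiff (m n : ℕ) (M : ℕ → ℕ → ℤ) {i j : ℕ} (hi : i < m) (hj : j ≤ n) :
    toH m n M (i+1) j = toH m n M i j + (1 - 2 * rsum M n i (n - j)) := by
  simp only [toH]
  rw [if_pos ⟨by omega, hj⟩, if_pos ⟨by omega, hj⟩, Finset.sum_range_succ]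
  push_cast
  ring

lemma hdiff (m n : ℕ) (M : ℕ → ℕ → ℤ) {i j : ℕ} (hi : i ≤ m) (hj : j < n) :
    toH m n M i (j+1) = toH m n M i j + (1 - 2 * csum M (n - (j+1)) i) := by
  have hsplit : ∀ a, rsum M n a (n - (j+1)) = M a (n - (j+1)) + rsum M n a (n - j) := by
    intro a
    rw [rsum_split M a (show n - (j+1) < n by omega), show n - (j+1) + 1 = n - j from by omega]
  simp only [toH]
  rw [if_pos ⟨hi, by omega⟩, if_pos ⟨hi, by omega⟩]
  have h1 : ∑ a ∈ Finset.range i, rsum M n a (n - (j+1))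
      = ∑ a ∈ Finset.range i, (M a (n - (j+1)) + rsum M n a (n - j)) :=
    Finset.sum_congr rfl (fun a _ => hsplit a)
  rw [h1, Finset.sum_add_distrib]
  have h2 : ∑ a ∈ Finset.range i, M a (n - (j+1)) = csum M (n - (j+1)) i := rfl
  rw [h2]
  push_cast
  ring

lemma corner (m n : ℕ) (M : ℕ → ℕ → ℤ) {i j : ℕ} (hi : i < m) (hj : j < n) :
    2 * M i (n - 1 - j) =
      (toH m n M (i+1) j - toH m n M i j) -
        (toH m n M (i+1) (j+1) - toH m n M i (j+1)) := by
  have h1 := vdiff m n M hi (show j ≤ n by omega)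
  have h2 := vdiff m n M hi (show j + 1 ≤ n by omega)
  have h3 : rsum M n i (n - (j+1)) = M i (n - 1 - j) + rsum M n i (n - j) := by
    rw [rsum_split M i (show n - (j+1) < n by omega),
      show n - (j+1) + 1 = n - j from by omega, show n - (j+1) = n - 1 - j from by omega]
  rw [h3] at h2
  linarith

lemma row_aux {m n : ℕ} {M : ℕ → ℕ → ℤ} (hM : IsPASM m n M) {i : ℕ} (hi : i < m) :
    ∀ d j, j + d = n →
      (rsum M n i j = 0 ∨ rsum M n i j = 1) ∧
      (∀ k, k < j → M i k ≠ 0 → (∀ t, k < t → t < j → M i t = 0) →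
        M i k = 1 - 2 * rsum M n i j) := by
  obtain ⟨h0, h1, hrow, hcol, haltR, haltC, hfirstC, hlastR⟩ := hM
  intro d
  induction d with
  | zero =>
    intro j hj
    have hz : rsum M n i j = 0 := by
      rw [rsum, Finset.Ico_eq_empty (by omega), Finset.sum_empty]
    refine ⟨Or.inl hz, ?_⟩
    intro k hk hk0 hzeros
    rw [hz]
    have := hlastR i k hi (by omega) hk0 (fun j' hj1 hj2 => hzeros j' hj1 (by omega))
    omega
  | succ d ih =>
    intro j hj
    have hjn : j < n := by omega
    have ihj := ih (j+1) (by omega)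
    have hsp : rsum M n i j = M i j + rsum M n i (j+1) := rsum_split M i hjn
    by_cases hz : M i j = 0
    · constructor
      · rw [hsp, hz]
        simpa using ihj.1
      · intro k hk hk0 hzeros
        have hzeros' : ∀ t, k < t → t < j + 1 → M i t = 0 := by
          intro t ht1 ht2
          by_cases htj : t = j
          · rw [htj]; exact hz
          · exact hzeros t ht1 (by omega)
        have := ihj.2 k (by omega) hk0 hzeros'
        rw [hsp, hz]
        omega
    · have hMij := ihj.2 j (by omega) hz (fun t ht1 ht2 => absurd ht2 (by omega))
      have hval := ihj.1
      constructor
      · rw [hsp]; omega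
      · intro k hk hk0 hzeros
        have halt := haltR i k j hi hk hjn hk0 hz (fun t ht1 ht2 => hzeros t ht1 ht2)
        rw [hsp]
        omega

lemma col_aux {m n : ℕ} {M : ℕ → ℕ → ℤ} (hM : IsPASM m n M) {j : ℕ} (hj : j < n) :
    ∀ i, (csum M j i = 0 ∨ csum M j i = 1) ∧
      (∀ k, i ≤ k → k < m → M k j ≠ 0 → (∀ t, i ≤ t → t < k → M t j = 0) →
        M k j = 1 - 2 * csum M j i) := by
  obtain ⟨h0, h1, hrow, hcol, haltR, haltC, hfirstC, hlastR⟩ := hM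
  intro i
  induction i with
  | zero =>
    have hz : csum M j 0 = 0 := by simp [csum]
    refine ⟨Or.inl hz, ?_⟩
    intro k _ hkm hk0 hzeros
    rw [hz]
    have := hfirstC k j hkm hj hk0 (fun i' hi' => hzeros i' (Nat.zero_le _) hi')
    omega
  | succ i ih =>
    have hsp : csum M j (i+1) = csum M j i + M i j := Finset.sum_range_succ _ _
    by_cases hz : M i j = 0
    · constructor
      · rw [hsp, hz]
        simpa using ih.1
      · intro k hk hkm hk0 hzeros
        have hzeros' : ∀ t, i ≤ t → t < k → M t j = 0 := by
          intro t ht1 ht2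
          rcases Nat.eq_or_lt_of_le ht1 with he|hl
          · rw [← he]; exact hz
          · exact hzeros t hl ht2
        have := ih.2 k (by omega) hkm hk0 hzeros'
        rw [hsp, hz]
        omega
    · have him : i < m := by
        by_contra hcon
        exact hz (h0 i j (Or.inl (by omega)))
      have hMij := ih.2 i le_rfl him hz (fun t ht1 ht2 => absurd ht1 (by omega))
      have hval := ih.1
      constructor
      · rw [hsp]; omega
      · intro k hk hkm hk0 hzeros
        have halt := haltC j i k hj (by omega) hkm hz hk0 (fun t ht1 ht2 => hzeros t ht1 ht2)
        rw [hsp]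
        omega

lemma rs01 {m n : ℕ} {M : ℕ → ℕ → ℤ} (hM : IsPASM m n M) {i : ℕ} (hi : i < m) (j : ℕ) :
    rsum M n i j = 0 ∨ rsum M n i j = 1 := by
  by_cases hj : j ≤ n
  · exact (row_aux hM hi (n - j) j (by omega)).1
  · left
    rw [rsum, Finset.Ico_eq_empty (by omega), Finset.sum_empty]

lemma cs01 {m n : ℕ} {M : ℕ → ℕ → ℤ} (hM : IsPASM m n M) {j : ℕ} (hj : j < n) (i : ℕ) :
    csum M j i = 0 ∨ csum M j i = 1 :=
  (col_aux hM hj i).1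

lemma toH_isPHF {m n : ℕ} {M : ℕ → ℕ → ℤ} (hM : IsPASM m n M) : IsPHF m n (toH m n M) := by
  refine ⟨?_, ?_, ?_, ?_, ?_, ?_⟩
  · intro i j hij
    simp only [toH]
    rw [if_neg (by omega)]
  · intro i j hi hj
    simp only [toH]
    rw [if_pos ⟨hi, hj⟩]
    have hXi : ∑ a ∈ Finset.range i, rsum M n a (n - j) ≤ (i : ℤ) := by
      calc ∑ a ∈ Finset.range i, rsum M n a (n - j) ≤ ∑ _a ∈ Finset.range i, (1:ℤ) :=
            Finset.sum_le_sum (fun a ha => by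
              rcases rs01 hM (lt_of_lt_of_le (Finset.mem_range.mp ha) hi) (n - j) with hc|hc <;>
                omega)
        _ = (i : ℤ) := by simp
    have hcomm : ∑ a ∈ Finset.range i, rsum M n a (n - j)
        = ∑ b ∈ Finset.Ico (n - j) n, csum M b i := by
      simp only [rsum, csum]
      exact Finset.sum_comm
    have hXj : ∑ a ∈ Finset.range i, rsum M n a (n - j) ≤ (j : ℤ) := by
      rw [hcomm]
      calc ∑ b ∈ Finset.Ico (n - j) n, csum M b i ≤ ∑ _b ∈ Finset.Ico (n - j) n, (1:ℤ) :=
            Finset.sum_le_sum (fun b hb => by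
              rcases cs01 hM (Finset.mem_Ico.mp hb).2 i with hc|hc <;> omega)
        _ = ((n - (n - j) : ℕ) : ℤ) := by simp [Nat.card_Ico]
        _ = (j : ℤ) := by
              have : n - (n - j) = j := by omega
              rw [this]
    linarith
  · intro k hk
    simp only [toH]
    rw [if_pos ⟨Nat.zero_le _, hk⟩]
    simp
  · intro l hl
    simp only [toH]
    rw [if_pos ⟨hl, Nat.zero_le _⟩]
    simp [rsum]
  · intro i j hi hj
    have hv := vdiff m n M hi hj
    rcases rs01 hM hi (n - j) with hc|hc <;> rw [hc] at hv
    · left; rw [hv]; ring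
    · right; rw [hv]; ring
  · intro i j hi hj
    have hv := hdiff m n M hi hj
    rcases cs01 hM (show n - (j+1) < n by omega) i with hc|hc <;> rw [hc] at hv
    · left; rw [hv]; ring
    · right; rw [hv]; ring

lemma toH_inj {m n : ℕ} {M M' : ℕ → ℕ → ℤ} (hM : IsPASM m n M) (hM' : IsPASM m n M')
    (heq : toH m n M = toH m n M') : M = M' := by
  funext i j
  by_cases hij : i < m ∧ j < n
  · obtain ⟨hi, hj⟩ := hij
    have c1 := corner m n M hi (show n - 1 - j < n by omega)
    have c2 := corner m n M' hi (show n - 1 - j < n by omega)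
    rw [heq] at c1
    have hMM : M i (n - 1 - (n - 1 - j)) = M' i (n - 1 - (n - 1 - j)) := by omega
    rwa [show n - 1 - (n - 1 - j) = j from by omega] at hMM
  · rw [hM.1 i j (by omega), hM'.1 i j (by omega)]

lemma fromH_two_mul {m n : ℕ} {h : ℕ → ℕ → ℤ} (hH : IsPHF m n h) {i j : ℕ}
    (hi : i < m) (hj : j < n) :
    2 * fromH m n h i j
      = h (i+1) (n-1-j) - h i (n-1-j) - (h (i+1) (n-j) - h i (n-j)) := by
  have h1 := hH.2.2.2.2.1 i (n-1-j) hi (by omega)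
  have h2 := hH.2.2.2.2.1 i (n-j) hi (by omega)
  simp only [fromH]
  rw [if_pos ⟨hi, hj⟩]
  omega

lemma fromH_rsum {m n : ℕ} {h : ℕ → ℕ → ℤ} (hH : IsPHF m n h) {i : ℕ} (hi : i < m) (j : ℕ) :
    2 * rsum (fromH m n h) n i j = 1 - (h (i+1) (n - j) - h i (n - j)) := by
  have col0 := hH.2.2.2.1
  have a1 := col0 (i+1) (by omega)
  have a2 := col0 i (by omega)
  by_cases hjn : j ≤ n
  · have step : ∀ d j, j + d = n →
        2 * rsum (fromH m n h) n i j = 1 - (h (i+1) (n - j) - h i (n - j)) := by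
      intro d
      induction d with
      | zero =>
        intro j hj
        have e : rsum (fromH m n h) n i j = 0 := by
          rw [rsum, Finset.Ico_eq_empty (by omega), Finset.sum_empty]
        rw [e, show n - j = 0 from by omega]
        omega
      | succ d ih =>
        intro j hj
        have hjn' : j < n := by omega
        have hsp := rsum_split (fromH m n h) i hjn'
        have h2 := fromH_two_mul hH hi hjn'
        have ihj := ih (j+1) (by omega)
        rw [show n - 1 - j = n - (j+1) from by omega] at h2
        have e : 2 * rsum (fromH m n h) n i j
            = 2 * fromH m n h i j + 2 * rsum (fromH m n h) n i (j+1) := by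
          rw [hsp]; ring
        rw [e, h2, ihj]
        ring
    exact step (n - j) j (by omega)
  · have e : rsum (fromH m n h) n i j = 0 := by
      rw [rsum, Finset.Ico_eq_empty (by omega), Finset.sum_empty]
    rw [e, show n - j = 0 from by omega]
    omega

lemma fromH_csum {m n : ℕ} {h : ℕ → ℕ → ℤ} (hH : IsPHF m n h) {j : ℕ} (hj : j < n) :
    ∀ i, i ≤ m → 2 * csum (fromH m n h) j i = 1 + h i (n-1-j) - h i (n-j) := by
  have row0 := hH.2.2.1
  intro i
  induction i with
  | zero =>
    intro _
    have a1 := row0 (n-1-j) (by omega)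
    have a2 := row0 (n-j) (by omega)
    have e : csum (fromH m n h) j 0 = 0 := by simp [csum]
    rw [e, a1, a2]
    omega
  | succ i ih =>
    intro him
    have hi : i < m := by omega
    have hsp : csum (fromH m n h) j (i+1) = csum (fromH m n h) j i + fromH m n h i j :=
      Finset.sum_range_succ _ _
    have h2 := fromH_two_mul hH hi hj
    have ihi := ih (by omega)
    rw [hsp]
    omega

lemma fromH_isPASM {m n : ℕ} {h : ℕ → ℕ → ℤ} (hH : IsPHF m n h) : IsPASM m n (fromH m n h) := by
  have vert := hH.2.2.2.2.1
  have horz := hH.2.2.2.2.2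
  have rs01' : ∀ i, i < m → ∀ j, rsum (fromH m n h) n i j = 0 ∨ rsum (fromH m n h) n i j = 1 := by
    intro i hi j
    have e := fromH_rsum hH hi j
    have hv := vert i (n - j) hi (by omega)
    omega
  have cs01' : ∀ j, j < n → ∀ i, i ≤ m →
      csum (fromH m n h) j i = 0 ∨ csum (fromH m n h) j i = 1 := by
    intro j hj i hi
    have e := fromH_csum hH hj i hi
    have hh := horz i (n-1-j) hi (by omega)
    rw [show n - 1 - j + 1 = n - j from by omega] at hh
    omega
  refine ⟨?_, ?_, ?_, ?_, ?_, ?_, ?_, ?_⟩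
  · intro i j hij
    simp only [fromH]
    rw [if_neg (by omega)]
  · intro i j hi hj
    have h2 := fromH_two_mul hH hi hj
    have v1 := vert i (n-1-j) hi (by omega)
    have v2 := vert i (n-j) hi (by omega)
    omega
  · intro i hi
    have e : ∑ b ∈ Finset.range n, fromH m n h i b = rsum (fromH m n h) n i 0 := by
      rw [rsum, Finset.range_eq_Ico]
    rw [e]
    exact rs01' i hi 0
  · intro j hj
    have := cs01' j hj m le_rfl
    simpa [csum] using this
  · intro i j₁ j₂ hi hj12 hj2 hne1 hne2 hzeros
    have e1 := rsum_split (fromH m n h) i (show j₁ < n by omega)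
    have e2 := rsum_split (fromH m n h) i (show j₂ < n by omega)
    have e3 : rsum (fromH m n h) n i (j₁+1) = rsum (fromH m n h) n i j₂ :=
      rsum_congr_zero i (by omega) (by omega) (fun t ht1 ht2 => hzeros t (by omega) ht2)
    have r1 := rs01' i hi j₁
    have r2 := rs01' i hi (j₁+1)
    have r3 := rs01' i hi (j₂+1)
    omega
  · intro j i₁ i₂ hj hi12 hi2 hne1 hne2 hzeros
    have e1 : csum (fromH m n h) j (i₁+1) = csum (fromH m n h) j i₁ + fromH m n h i₁ j :=
      Finset.sum_range_succ _ _
    have e2 : csum (fromH m n h) j (i₂+1) = csum (fromH m n h) j i₂ + fromH m n h i₂ j :=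
      Finset.sum_range_succ _ _
    have e3 : csum (fromH m n h) j i₂ = csum (fromH m n h) j (i₁+1) :=
      csum_congr_zero (by omega) (fun t ht1 ht2 => hzeros t (by omega) ht2)
    have c1 := cs01' j hj i₁ (by omega)
    have c2 := cs01' j hj (i₁+1) (by omega)
    have c3 := cs01' j hj (i₂+1) (by omega)
    omega
  · intro i j hi hj hne hzeros
    have e0 : csum (fromH m n h) j i = csum (fromH m n h) j 0 :=
      csum_congr_zero (Nat.zero_le i) (fun t _ ht2 => hzeros t ht2)
    have ez : csum (fromH m n h) j 0 = 0 := by simp [csum]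
    have e1 : csum (fromH m n h) j (i+1) = csum (fromH m n h) j i + fromH m n h i j :=
      Finset.sum_range_succ _ _
    have hv := cs01' j hj (i+1) (by omega)
    omega
  · intro i j hi hj hne hzeros
    have e0 : rsum (fromH m n h) n i (j+1) = rsum (fromH m n h) n i n :=
      rsum_congr_zero i (by omega) le_rfl (fun t ht1 ht2 => hzeros t (by omega) ht2)
    have ez : rsum (fromH m n h) n i n = 0 := by simp [rsum]
    have e1 := rsum_split (fromH m n h) i hj
    have hv := rs01' i hi j
    omega

lemma toH_fromH {m n : ℕ} {h : ℕ → ℕ → ℤ} (hH : IsPHF m n h) : toH m n (fromH m n h) = h := by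
  funext i j
  by_cases hij : i ≤ m ∧ j ≤ n
  · obtain ⟨hi, hj⟩ := hij
    simp only [toH]
    rw [if_pos ⟨hi, hj⟩]
    have key : ∀ a ∈ Finset.range i,
        2 * rsum (fromH m n h) n a (n - j) = 1 - (h (a+1) j - h a j) := by
      intro a ha
      have haa : a < m := lt_of_lt_of_le (Finset.mem_range.mp ha) hi
      have e := fromH_rsum hH haa (n - j)
      rwa [show n - (n - j) = j from by omega] at e
    have hs : 2 * ∑ a ∈ Finset.range i, rsum (fromH m n h) n a (n - j)
        = ∑ a ∈ Finset.range i, ((1:ℤ) - (h (a+1) j - h a j)) := by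
      rw [Finset.mul_sum]
      exact Finset.sum_congr rfl key
    have ht : ∑ a ∈ Finset.range i, (h (a+1) j - h a j) = h i j - h 0 j :=
      Finset.sum_range_sub (fun a => h a j) i
    have hsum : ∑ a ∈ Finset.range i, ((1:ℤ) - (h (a+1) j - h a j)) = i - (h i j - h 0 j) := by
      rw [Finset.sum_sub_distrib, ht]
      simp
    have h0j := hH.2.2.1 j hj
    linarith [hs, hsum, h0j]
  · simp only [toH]
    rw [if_neg hij]
    exact (hH.1 i j (by omega)).symm

end PASMBijAux

/-- There is a bijection between the set of `m × n` partial
alternating sign matrices and the set of `(m,n)`-partial height-function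
matrices. -/
theorem pasm_bijects_with_phf (m n : ℕ) :
    ∃ f : (ℕ → ℕ → ℤ) → (ℕ → ℕ → ℤ),
      Set.BijOn f {M | IsPASM m n M} {h | IsPHF m n h} := by
  refine ⟨PASMBijAux.toH m n, fun M hM => PASMBijAux.toH_isPHF hM,
    fun M hM M' hM' heq => PASMBijAux.toH_inj hM hM' heq, fun x hx => ?_⟩
  exact ⟨PASMBijAux.fromH m n x, PASMBijAux.fromH_isPASM hx, PASMBijAux.toH_fromH hx⟩
end

section
/- For m,n ≥ 1, the poset P_{m,n} is a ranked poset in which the rank of the element (i,j,k) equals m+n−2−i−j+2k (that is, this function takes the value 0 on minimal elements and increases by exactly 1 along each covering relation); P_{m,n} has a unique minimal element, namely (m−1,n−1,0), of rank 0; and the maximal elements of P_{m,n} are exactly the elements of the form (i,i,i), each of which has rank m+n−2. -/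
/-- The underlying set of the PASM poset `P_{m,n}`: triples `(i,j,k) ∈ ℤ³` with
`0 ≤ k ≤ m-1`, `k ≤ j ≤ n-1`, and `k ≤ i ≤ m-1`. -/
def Pset (m n : ℕ) : Set (ℤ × ℤ × ℤ) :=
  {p | 0 ≤ p.2.2 ∧ p.2.2 ≤ (m : ℤ) - 1 ∧
       p.2.2 ≤ p.2.1 ∧ p.2.1 ≤ (n : ℤ) - 1 ∧
       p.2.2 ≤ p.1 ∧ p.1 ≤ (m : ℤ) - 1}

/-- The generating covering relations of `P_{m,n}`: `PCovBy m n x y` says that `y`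
covers `x`, i.e. `y = (i,j,k)` and `x` is one of `(i+1,j,k)`, `(i,j+1,k)`,
`(i-1,j,k-1)`, `(i,j-1,k-1)`, with both triples elements of `P_{m,n}`. -/
def PCovBy (m n : ℕ) (x y : ℤ × ℤ × ℤ) : Prop :=
  x ∈ Pset m n ∧ y ∈ Pset m n ∧
  (x = (y.1 + 1, y.2.1, y.2.2) ∨ x = (y.1, y.2.1 + 1, y.2.2) ∨
   x = (y.1 - 1, y.2.1, y.2.2 - 1) ∨ x = (y.1, y.2.1 - 1, y.2.2 - 1))

/-- The partial order of `P_{m,n}`: the reflexive-transitive closure of the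
generating covering relations. -/
def Ple (m n : ℕ) (x y : ℤ × ℤ × ℤ) : Prop :=
  Relation.ReflTransGen (PCovBy m n) x y

/-- The rank function of `P_{m,n}`: `(i,j,k) ↦ m + n - 2 - i - j + 2k`. -/
def Prank (m n : ℕ) (p : ℤ × ℤ × ℤ) : ℤ :=
  (m : ℤ) + n - 2 - p.1 - p.2.1 + 2 * p.2.2

lemma prank_covby {m n : ℕ} {x y : ℤ × ℤ × ℤ} (h : PCovBy m n x y) :
    Prank m n y = Prank m n x + 1 := by
  obtain ⟨-, -, h | h | h | h⟩ := h <;> subst h <;> simp [Prank] <;> ring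

lemma prank_le {m n : ℕ} {x y : ℤ × ℤ × ℤ} (h : Ple m n x y) :
    Prank m n x ≤ Prank m n y := by
  induction h with
  | refl => exact le_refl _
  | tail _ hbc ih => rw [prank_covby hbc]; omega

lemma ple_eq_or_lt {m n : ℕ} {x y : ℤ × ℤ × ℤ} (h : Ple m n x y) :
    x = y ∨ Prank m n x < Prank m n y := by
  induction h with
  | refl => exact Or.inl rfl
  | tail hab hbc ih =>
    right
    have := prank_le hab
    rw [prank_covby hbc]
    omega

lemma no_cover_above {m n : ℕ} (k : ℤ) (y : ℤ × ℤ × ℤ) :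
    ¬ PCovBy m n (k, k, k) y := by
  obtain ⟨y1, y2, y3⟩ := y
  rintro ⟨hx, hy, h | h | h | h⟩ <;>
    simp only [Pset, Set.mem_setOf_eq, Prod.mk.injEq] at hy h <;> omega

lemma no_cover_below {m n : ℕ} (z : ℤ × ℤ × ℤ) :
    ¬ PCovBy m n z ((m : ℤ) - 1, (n : ℤ) - 1, (0 : ℤ)) := by
  obtain ⟨z1, z2, z3⟩ := z
  rintro ⟨hx, hy, h | h | h | h⟩ <;>
    simp only [Pset, Set.mem_setOf_eq, Prod.mk.injEq] at hx h <;> omega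

lemma max_of_no_cover {m n : ℕ} {p : ℤ × ℤ × ℤ} (h : ∀ y, ¬ PCovBy m n p y)
    {q : ℤ × ℤ × ℤ} (hq : Ple m n p q) : q = p := by
  rcases hq.cases_head with h1 | ⟨c, hc, _⟩
  · exact h1.symm
  · exact absurd hc (h c)

lemma min_of_no_cover {m n : ℕ} {p : ℤ × ℤ × ℤ} (h : ∀ z, ¬ PCovBy m n z p)
    {q : ℤ × ℤ × ℤ} (hq : Ple m n q p) : q = p := by
  rcases Relation.ReflTransGen.cases_tail hq with h1 | ⟨c, _, hc⟩
  · exact h1.symm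
  · exact absurd hc (h c)

/-- For `m, n ≥ 1`: `P_{m,n}` is a poset (the generated order is
antisymmetric) which is ranked by `(i,j,k) ↦ m+n-2-i-j+2k` (this function takes the
value 0 on minimal elements and increases by exactly 1 along each covering relation);
it has the unique minimal element `(m-1, n-1, 0)`, of rank 0; and its maximal elements
are exactly the elements of the form `(i,i,i)`, each of rank `m+n-2`. -/
theorem pasm_poset_ranked (m n : ℕ) (hm : 1 ≤ m) (hn : 1 ≤ n) :
    -- antisymmetry (so that `Ple` is indeed a partial order)
    (∀ x y, Ple m n x y → Ple m n y x → x = y) ∧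
    -- the rank function vanishes on minimal elements
    (∀ p ∈ Pset m n, (∀ q ∈ Pset m n, Ple m n q p → q = p) → Prank m n p = 0) ∧
    -- the rank function increases by exactly 1 along each covering relation of the order
    (∀ x y, x ∈ Pset m n → y ∈ Pset m n → Ple m n x y → x ≠ y →
      (∀ z, Ple m n x z → Ple m n z y → z = x ∨ z = y) →
      Prank m n y = Prank m n x + 1) ∧
    -- (m-1, n-1, 0) is a minimal element
    (((m : ℤ) - 1, (n : ℤ) - 1, (0 : ℤ)) ∈ Pset m n ∧
      (∀ q ∈ Pset m n, Ple m n q ((m : ℤ) - 1, (n : ℤ) - 1, (0 : ℤ)) →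
        q = ((m : ℤ) - 1, (n : ℤ) - 1, (0 : ℤ)))) ∧
    -- it is the unique minimal element
    (∀ p ∈ Pset m n, (∀ q ∈ Pset m n, Ple m n q p → q = p) →
      p = ((m : ℤ) - 1, (n : ℤ) - 1, (0 : ℤ))) ∧
    -- it has rank 0
    Prank m n ((m : ℤ) - 1, (n : ℤ) - 1, (0 : ℤ)) = 0 ∧
    -- the maximal elements are exactly those of the form (i,i,i)
    (∀ p ∈ Pset m n, (∀ q ∈ Pset m n, Ple m n p q → q = p) ↔ (∃ i : ℤ, p = (i, i, i))) ∧
    -- every maximal element has rank m + n - 2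
    (∀ p ∈ Pset m n, (∀ q ∈ Pset m n, Ple m n p q → q = p) →
      Prank m n p = (m : ℤ) + n - 2) := by
  have hmem : ∀ q ∈ Pset m n, True := fun _ _ => trivial
  -- the unique minimal element characterization
  have min_char : ∀ p ∈ Pset m n, (∀ q ∈ Pset m n, Ple m n q p → q = p) →
      p = ((m : ℤ) - 1, (n : ℤ) - 1, (0 : ℤ)) := by
    rintro ⟨i, j, k⟩ hp hmin
    simp only [Pset, Set.mem_setOf_eq] at hp
    have hi : i = (m : ℤ) - 1 := by
      by_contra hne
      have hq : (i + 1, j, k) ∈ Pset m n := by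
        simp only [Pset, Set.mem_setOf_eq]; omega
      have := hmin _ hq (Relation.ReflTransGen.single ⟨hq, hp, Or.inl rfl⟩)
      simp only [Prod.mk.injEq] at this; omega
    have hj : j = (n : ℤ) - 1 := by
      by_contra hne
      have hq : (i, j + 1, k) ∈ Pset m n := by
        simp only [Pset, Set.mem_setOf_eq]; omega
      have := hmin _ hq (Relation.ReflTransGen.single ⟨hq, hp, Or.inr (Or.inl rfl)⟩)
      simp only [Prod.mk.injEq] at this; omega
    have hk : k = 0 := by
      by_contra hne
      have hq : (i - 1, j, k - 1) ∈ Pset m n := by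
        simp only [Pset, Set.mem_setOf_eq]; omega
      have := hmin _ hq
        (Relation.ReflTransGen.single ⟨hq, hp, Or.inr (Or.inr (Or.inl rfl))⟩)
      simp only [Prod.mk.injEq] at this; omega
    simp [hi, hj, hk]
  have max_char : ∀ p ∈ Pset m n,
      (∀ q ∈ Pset m n, Ple m n p q → q = p) ↔ (∃ i : ℤ, p = (i, i, i)) := by
    rintro ⟨i, j, k⟩ hp
    constructor
    · intro hmax
      simp only [Pset, Set.mem_setOf_eq] at hp
      have hi : i = k := by
        by_contra hne
        have hq : ((i - 1 : ℤ), j, k) ∈ Pset m n := by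
          simp only [Pset, Set.mem_setOf_eq]; omega
        have hpq : PCovBy m n (i, j, k) (i - 1, j, k) := by
          refine ⟨hp, hq, Or.inl ?_⟩
          simp only [Prod.mk.injEq, and_true, true_and, eq_self_iff_true]; omega
        have := hmax _ hq (Relation.ReflTransGen.single hpq)
        simp only [Prod.mk.injEq] at this; omega
      have hj : j = k := by
        by_contra hne
        have hq : (i, (j - 1 : ℤ), k) ∈ Pset m n := by
          simp only [Pset, Set.mem_setOf_eq]; omega
        have hpq : PCovBy m n (i, j, k) (i, j - 1, k) := by
          refine ⟨hp, hq, Or.inr (Or.inl ?_)⟩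
          simp only [Prod.mk.injEq, and_true, true_and, eq_self_iff_true]; omega
        have := hmax _ hq (Relation.ReflTransGen.single hpq)
        simp only [Prod.mk.injEq] at this; omega
      exact ⟨k, by simp [hi, hj]⟩
    · rintro ⟨a, ha⟩ q hq hpq
      rw [ha] at hpq
      rw [ha]
      exact max_of_no_cover (no_cover_above a) hpq
  refine ⟨?_, ?_, ?_, ?_, min_char, ?_, max_char, ?_⟩
  · intro x y hxy hyx
    rcases ple_eq_or_lt hxy with h | h
    · exact h
    · rcases ple_eq_or_lt hyx with h' | h'
      · exact h'.symm
      · omega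
  · intro p hp hmin
    rw [min_char p hp hmin]
    simp [Prank]; ring
  · intro x y hx hy hxy hne hint
    rcases hxy.cases_head with h | ⟨c, hc, hcy⟩
    · exact absurd h hne
    · rcases hint c (Relation.ReflTransGen.single hc) hcy with h | h
      · subst h
        have := prank_covby hc
        omega
      · subst h
        exact prank_covby hc
  · constructor
    · simp only [Pset, Set.mem_setOf_eq]; omega
    · intro q hq hle
      exact min_of_no_cover (fun z => no_cover_below z) hle
  · simp [Prank]; ring
  · intro p hp hmax
    obtain ⟨a, ha⟩ := (max_char p hp).mp hmax
    subst ha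
    simp [Prank]; ring
end

section
/- For 1≤i≤m and 1≤j≤n, let C_{i,j} denote the set of elements of P_{m,n} whose first two coordinates are (i−1, j−1). The map sending an order ideal O of P_{m,n} to the matrix (h_{i,j})_{0≤i≤m,0≤j≤n} defined by h_{0,k}=k for 0≤k≤n, h_{ℓ,0}=ℓ for 0≤ℓ≤m, and h_{i,j} = i + j − 2·|O ∩ C_{i,j}| for 1≤i≤m, 1≤j≤n, is a bijection from J(P_{m,n}) onto the set of (m,n)-partial height-function matrices. -/
/-- An order ideal of `P_{m,n}`: a downward-closed subset of `Pset m n`. -/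
def IsOI (m n : ℕ) (O : Set (ℤ × ℤ × ℤ)) : Prop :=
  O ⊆ Pset m n ∧ ∀ y ∈ O, ∀ z, Ple m n z y → z ∈ O

/-- `Cset m n i j` (for `1 ≤ i ≤ m`, `1 ≤ j ≤ n`): the set of elements of `P_{m,n}`
whose first two coordinates are `(i-1, j-1)`. -/
def Cset (m n i j : ℕ) : Set (ℤ × ℤ × ℤ) :=
  {p | p ∈ Pset m n ∧ p.1 = (i : ℤ) - 1 ∧ p.2.1 = (j : ℤ) - 1}

/-- The map sending an order ideal `O` of `P_{m,n}` to the matrix `(h i j)` with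
`h 0 k = k`, `h ℓ 0 = ℓ`, and `h i j = i + j - 2|O ∩ C_{i,j}|` for
`1 ≤ i ≤ m`, `1 ≤ j ≤ n` (normalized to vanish outside `[0,m] × [0,n]`). -/
noncomputable def idealToPHF (m n : ℕ) (O : Set (ℤ × ℤ × ℤ)) : ℕ → ℕ → ℤ :=
  fun i j =>
    if i ≤ m ∧ j ≤ n then
      if i = 0 then (j : ℤ)
      else if j = 0 then (i : ℤ)
      else (i : ℤ) + j - 2 * (O ∩ Cset m n i j).ncard
    else 0

/-!
An order ideal `O` of `P_{m,n}` is determined by its column heights: for fixed `(a, b)` the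
elements `(a, b, k)` of `O` are exactly those with `0 ≤ k < c(a,b)`, because `(a, b, k - 1)` lies
below `(a - 1, b, k - 1)`, which lies below `(a, b, k)`. The covering relations then say exactly
that `c` weakly increases by at most one in each of the first two coordinates, which is the
condition that `i + j - 2 c(i-1, j-1)` changes by `±1` between adjacent entries. Conversely, a
partial height-function matrix has `h i j ≡ i + j (mod 2)` and `|i - j| ≤ h i j ≤ i + j`, so it
is of this form for a unique ideal.
-/

open Set

lemma ncard_Ico_int (a b : ℤ) : (Ico a b).ncard = (b - a).toNat := by
  rw [← Finset.coe_Ico, ncard_coe_finset, Int.card_Ico]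

lemma eq_Ico_ncard_of_sub_one_mem {S : Set ℤ} (hfin : S.Finite) (hnonneg : ∀ k ∈ S, 0 ≤ k)
    (hsub : ∀ k ∈ S, 1 ≤ k → k - 1 ∈ S) : S = Ico 0 (S.ncard : ℤ) := by
  have hIco : ∀ k ∈ S, Ico 0 (k + 1) ⊆ S := by
    intro k hk l ⟨hl, hlk⟩
    have key : ∀ l ≤ k, 0 ≤ l → l ∈ S :=
      Int.leInductionDown (fun _ => hk) fun l _ ih hl => hsub l (ih (by omega)) (by omega)
    exact key l (by omega) hl
  ext k
  constructor
  · intro hk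
    have := ncard_le_ncard (hIco k hk) hfin
    rw [ncard_Ico_int] at this
    exact ⟨hnonneg k hk, by omega⟩
  · rintro ⟨hk0, hkS⟩
    by_contra hk
    have hsubset : S ⊆ Ico 0 k := fun l hl =>
      ⟨hnonneg l hl, lt_of_not_ge fun hkl => hk (hIco l hl ⟨hk0, by omega⟩)⟩
    have := ncard_le_ncard hsubset (finite_Ico 0 k)
    rw [ncard_Ico_int] at this
    omega

variable {m n : ℕ}

lemma mem_Pset {a b k : ℤ} :
    (a, b, k) ∈ Pset m n ↔
      0 ≤ k ∧ k ≤ (m : ℤ) - 1 ∧ k ≤ b ∧ b ≤ (n : ℤ) - 1 ∧ k ≤ a ∧ a ≤ (m : ℤ) - 1 :=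
  Iff.rfl

def fiber (O : Set (ℤ × ℤ × ℤ)) (a b : ℤ) : Set ℤ := (fun k => (a, b, k)) ⁻¹' O

section Fiber

variable {O : Set (ℤ × ℤ × ℤ)}

lemma fiber_subset_Ico (hO : O ⊆ Pset m n) (a b : ℤ) : fiber O a b ⊆ Ico 0 (min a b + 1) :=
  fun k hk => by
    have := hO hk
    rw [mem_Pset] at this
    exact ⟨this.1, by omega⟩

lemma fiber_finite (hO : O ⊆ Pset m n) (a b : ℤ) : (fiber O a b).Finite :=
  (finite_Ico _ _).subset (fiber_subset_Ico hO a b)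

lemma ncard_fiber_le (hO : O ⊆ Pset m n) (a b : ℤ) :
    (fiber O a b).ncard ≤ (min a b + 1).toNat := by
  simpa [ncard_Ico_int] using ncard_le_ncard (fiber_subset_Ico hO a b) (finite_Ico _ _)

lemma ncard_inter_Cset (hO : O ⊆ Pset m n) (i j : ℕ) :
    (O ∩ Cset m n i j).ncard = (fiber O (i - 1) (j - 1)).ncard := by
  have hinj : Function.Injective fun k : ℤ => ((i : ℤ) - 1, (j : ℤ) - 1, k) :=
    fun _ _ h => by simpa using h
  rw [← ncard_preimage_of_injective_subset_range hinj]
  · congr 1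
    ext k
    exact ⟨fun h => h.1, fun h => ⟨h, hO h, rfl, rfl⟩⟩
  · rintro ⟨a, b, k⟩ ⟨-, -, rfl, rfl⟩
    exact ⟨k, rfl⟩

end Fiber

lemma Cset_zero_left (j : ℕ) : Cset m n 0 j = ∅ :=
  eq_empty_of_forall_notMem fun _ ⟨⟨hk, _, _, _, hka, _⟩, ha, _⟩ => by omega

lemma Cset_zero_right (i : ℕ) : Cset m n i 0 = ∅ :=
  eq_empty_of_forall_notMem fun _ ⟨⟨hk, _, hkb, _⟩, _, hb⟩ => by omega

/-- The defining formula also holds on row and column `0`, where `C_{i,j}` is empty. -/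
lemma idealToPHF_of_le (O : Set (ℤ × ℤ × ℤ)) {i j : ℕ} (hi : i ≤ m) (hj : j ≤ n) :
    idealToPHF m n O i j = i + j - 2 * (O ∩ Cset m n i j).ncard := by
  by_cases hi0 : i = 0
  · subst hi0
    simp [idealToPHF, hj, Cset_zero_left]
  by_cases hj0 : j = 0
  · subst hj0
    simp [idealToPHF, hi, hi0, Cset_zero_right]
  simp [idealToPHF, hi, hj, hi0, hj0]

lemma idealToPHF_eq_fiber {O : Set (ℤ × ℤ × ℤ)} (hO : O ⊆ Pset m n) {i j : ℕ} (hi : i ≤ m)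
    (hj : j ≤ n) : idealToPHF m n O i j = i + j - 2 * (fiber O (i - 1) (j - 1)).ncard := by
  rw [idealToPHF_of_le O hi hj, ncard_inter_Cset hO]

namespace IsOI

variable {O : Set (ℤ × ℤ × ℤ)} {a b k : ℤ}

lemma mem_of_covBy (hO : IsOI m n O) {x y : ℤ × ℤ × ℤ} (hy : y ∈ O) (hxy : PCovBy m n x y) :
    x ∈ O :=
  hO.2 y hy x (.single hxy)

lemma add_one_fst_mem (hO : IsOI m n O) (h : (a, b, k) ∈ O) (ha : a + 1 ≤ (m : ℤ) - 1) :
    (a + 1, b, k) ∈ O := by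
  have hP := hO.1 h
  rw [mem_Pset] at hP
  exact hO.mem_of_covBy h ⟨by rw [mem_Pset]; omega, hO.1 h, Or.inl rfl⟩

lemma add_one_snd_mem (hO : IsOI m n O) (h : (a, b, k) ∈ O) (hb : b + 1 ≤ (n : ℤ) - 1) :
    (a, b + 1, k) ∈ O := by
  have hP := hO.1 h
  rw [mem_Pset] at hP
  exact hO.mem_of_covBy h ⟨by rw [mem_Pset]; omega, hO.1 h, Or.inr (Or.inl rfl)⟩

lemma sub_one_fst_sub_one_mem (hO : IsOI m n O) (h : (a, b, k) ∈ O) (hk : 1 ≤ k) :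
    (a - 1, b, k - 1) ∈ O := by
  have hP := hO.1 h
  rw [mem_Pset] at hP
  exact hO.mem_of_covBy h ⟨by rw [mem_Pset]; omega, hO.1 h, Or.inr (Or.inr (Or.inl rfl))⟩

lemma sub_one_snd_sub_one_mem (hO : IsOI m n O) (h : (a, b, k) ∈ O) (hk : 1 ≤ k) :
    (a, b - 1, k - 1) ∈ O := by
  have hP := hO.1 h
  rw [mem_Pset] at hP
  exact hO.mem_of_covBy h ⟨by rw [mem_Pset]; omega, hO.1 h, Or.inr (Or.inr (Or.inr rfl))⟩

lemma sub_one_third_mem (hO : IsOI m n O) (h : (a, b, k) ∈ O) (hk : 1 ≤ k) :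
    (a, b, k - 1) ∈ O := by
  have hP := hO.1 h
  rw [mem_Pset] at hP
  simpa using hO.add_one_fst_mem (hO.sub_one_fst_sub_one_mem h hk) (by omega)

lemma fiber_eq_Ico (hO : IsOI m n O) (a b : ℤ) :
    fiber O a b = Ico 0 ((fiber O a b).ncard : ℤ) :=
  eq_Ico_ncard_of_sub_one_mem (fiber_finite hO.1 a b) (fun _ hk => (hO.1 hk).1)
    fun _ hk => hO.sub_one_third_mem hk

lemma mem_iff (hO : IsOI m n O) : (a, b, k) ∈ O ↔ 0 ≤ k ∧ k < (fiber O a b).ncard :=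
  Set.ext_iff.mp (hO.fiber_eq_Ico a b) k

lemma ncard_fiber_sub_one_fst_le (hO : IsOI m n O) (ha : a ≤ (m : ℤ) - 1) :
    (fiber O (a - 1) b).ncard ≤ (fiber O a b).ncard :=
  ncard_le_ncard (fun _ hk => by simpa [fiber] using hO.add_one_fst_mem hk (by omega))
    (fiber_finite hO.1 a b)

lemma ncard_fiber_sub_one_snd_le (hO : IsOI m n O) (hb : b ≤ (n : ℤ) - 1) :
    (fiber O a (b - 1)).ncard ≤ (fiber O a b).ncard :=
  ncard_le_ncard (fun _ hk => by simpa [fiber] using hO.add_one_snd_mem hk (by omega))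
    (fiber_finite hO.1 a b)

lemma ncard_fiber_le_sub_one_fst_add_one (hO : IsOI m n O) :
    (fiber O a b).ncard ≤ (fiber O (a - 1) b).ncard + 1 := by
  by_contra! hlt
  have htop : (a, b, ((fiber O a b).ncard : ℤ) - 1) ∈ O := hO.mem_iff.mpr (by omega)
  have := hO.mem_iff.mp (hO.sub_one_fst_sub_one_mem htop (by omega))
  omega

lemma ncard_fiber_le_sub_one_snd_add_one (hO : IsOI m n O) :
    (fiber O a b).ncard ≤ (fiber O a (b - 1)).ncard + 1 := by
  by_contra! hlt
  have htop : (a, b, ((fiber O a b).ncard : ℤ) - 1) ∈ O := hO.mem_iff.mpr (by omega)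
  have := hO.mem_iff.mp (hO.sub_one_snd_sub_one_mem htop (by omega))
  omega

end IsOI

lemma isPHF_idealToPHF {O : Set (ℤ × ℤ × ℤ)} (hO : IsOI m n O) :
    IsPHF m n (idealToPHF m n O) := by
  have hval := fun {i j : ℕ} (hi : i ≤ m) (hj : j ≤ n) => idealToPHF_eq_fiber hO.1 hi hj
  refine ⟨fun i j hij => ?_, fun i j hi hj => ?_, fun k hk => ?_, fun l hl => ?_,
    fun i j hi hj => ?_, fun i j hi hj => ?_⟩
  · simp only [idealToPHF]
    split_ifs <;> omega
  · have := ncard_fiber_le hO.1 ((i : ℤ) - 1) ((j : ℤ) - 1)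
    rw [hval hi hj]
    omega
  · simp [idealToPHF_of_le O (Nat.zero_le m) hk, Cset_zero_left]
  · simp [idealToPHF_of_le O hl (Nat.zero_le n), Cset_zero_right]
  · have := hO.ncard_fiber_sub_one_fst_le (a := i) (b := j - 1) (by omega)
    have := hO.ncard_fiber_le_sub_one_fst_add_one (a := i) (b := j - 1)
    rw [hval hi.le hj, hval hi hj]
    push_cast
    simp only [add_sub_cancel_right]
    omega
  · have := hO.ncard_fiber_sub_one_snd_le (a := i - 1) (b := j) (by omega)
    have := hO.ncard_fiber_le_sub_one_snd_add_one (a := i - 1) (b := j)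
    rw [hval hi hj.le, hval hi hj]
    push_cast
    simp only [add_sub_cancel_right]
    omega

namespace IsPHF

variable {h : ℕ → ℕ → ℤ}

lemma abs_sub_le_fst (hh : IsPHF m n h) {i j : ℕ} (hi : i ≤ m) (hj : j ≤ n) :
    |h i j - j| ≤ i := by
  induction i with
  | zero => simp [hh.2.2.1 j hj]
  | succ i ih =>
    have := abs_le.mp (ih (by omega))
    rw [abs_le]
    rcases hh.2.2.2.2.1 i j (by omega) hj with e | e <;> rw [e] <;> push_cast <;> omega

lemma abs_sub_le_snd (hh : IsPHF m n h) {i j : ℕ} (hi : i ≤ m) (hj : j ≤ n) :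
    |h i j - i| ≤ j := by
  induction j with
  | zero => simp [hh.2.2.2.1 i hi]
  | succ j ih =>
    have := abs_le.mp (ih (by omega))
    rw [abs_le]
    rcases hh.2.2.2.2.2 i j hi (by omega) with e | e <;> rw [e] <;> push_cast <;> omega

lemma two_dvd_add_sub (hh : IsPHF m n h) {i j : ℕ} (hi : i ≤ m) (hj : j ≤ n) :
    2 ∣ (i : ℤ) + j - h i j := by
  induction j with
  | zero => simp [hh.2.2.2.1 i hi]
  | succ j ih =>
    have := ih (by omega)
    rcases hh.2.2.2.2.2 i j hi (by omega) with e | e <;> rw [e] <;> push_cast <;> omega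

lemma exists_eq_add_sub_two_mul (hh : IsPHF m n h) {i j : ℕ} (hi : i ≤ m) (hj : j ≤ n) :
    ∃ c : ℕ, c ≤ min i j ∧ h i j = i + j - 2 * c := by
  obtain ⟨c, hc⟩ := hh.two_dvd_add_sub hi hj
  have := abs_le.mp (hh.abs_sub_le_fst hi hj)
  have := abs_le.mp (hh.abs_sub_le_snd hi hj)
  exact ⟨c.toNat, by omega, by omega⟩

end IsPHF

/-- The candidate inverse: `(a, b, k)` is kept iff `k < c`, where
`h (a + 1) (b + 1) = (a + 1) + (b + 1) - 2 c`. -/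
def ofPHF (m n : ℕ) (h : ℕ → ℕ → ℤ) : Set (ℤ × ℤ × ℤ) :=
  {p | p ∈ Pset m n ∧ 2 * p.2.2 + h (p.1 + 1).toNat (p.2.1 + 1).toNat ≤ p.1 + p.2.1}

section OfPHF

variable {h : ℕ → ℕ → ℤ}

lemma mem_ofPHF_of_covBy (hh : IsPHF m n h) {x y : ℤ × ℤ × ℤ} (hxy : PCovBy m n x y)
    (hy : y ∈ ofPHF m n h) : x ∈ ofPHF m n h := by
  obtain ⟨-, -, -, -, hvert, hhor⟩ := hh
  obtain ⟨hx, -, hcases⟩ := hxy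
  obtain ⟨a, b, k⟩ := y
  obtain ⟨hy, hle⟩ := hy
  refine ⟨hx, ?_⟩
  rw [mem_Pset] at hy
  dsimp only at hle
  rcases hcases with rfl | rfl | rfl | rfl <;> rw [mem_Pset] at hx <;> dsimp only at hx ⊢
  · rw [show (a + 1 + 1).toNat = (a + 1).toNat + 1 by omega]
    have := hvert (a + 1).toNat (b + 1).toNat (by omega) (by omega)
    omega
  · rw [show (b + 1 + 1).toNat = (b + 1).toNat + 1 by omega]
    have := hhor (a + 1).toNat (b + 1).toNat (by omega) (by omega)
    omega
  · rw [show (a + 1).toNat = (a - 1 + 1).toNat + 1 by omega] at hle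
    have := hvert (a - 1 + 1).toNat (b + 1).toNat (by omega) (by omega)
    omega
  · rw [show (b + 1).toNat = (b - 1 + 1).toNat + 1 by omega] at hle
    have := hhor (a + 1).toNat (b - 1 + 1).toNat (by omega) (by omega)
    omega

lemma isOI_ofPHF (hh : IsPHF m n h) : IsOI m n (ofPHF m n h) :=
  ⟨fun _ hp => hp.1, fun _ hy _ hzy =>
    hzy.head_induction_on hy fun hxc _ hc => mem_ofPHF_of_covBy hh hxc hc⟩

lemma idealToPHF_ofPHF (hh : IsPHF m n h) : idealToPHF m n (ofPHF m n h) = h := by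
  funext i j
  by_cases hij : i ≤ m ∧ j ≤ n
  · obtain ⟨c, hc, hcij⟩ := hh.exists_eq_add_sub_two_mul hij.1 hij.2
    have hfiber : fiber (ofPHF m n h) (i - 1) (j - 1) = Ico 0 (c : ℤ) := by
      ext k
      simp only [fiber, ofPHF, mem_preimage, mem_ofPred_eq, mem_Pset, mem_Ico, sub_add_cancel,
        Int.toNat_natCast, hcij]
      omega
    rw [idealToPHF_eq_fiber (fun _ hp => hp.1) hij.1 hij.2, hfiber, ncard_Ico_int, hcij]
    omega
  · simp only [idealToPHF, if_neg hij]
    exact (hh.1 i j (by omega)).symm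

lemma ofPHF_idealToPHF {O : Set (ℤ × ℤ × ℤ)} (hO : IsOI m n O) :
    ofPHF m n (idealToPHF m n O) = O := by
  ext ⟨a, b, k⟩
  by_cases hP : (a, b, k) ∈ Pset m n
  · have hP' := mem_Pset.mp hP
    have hval := idealToPHF_eq_fiber hO.1 (i := (a + 1).toNat) (j := (b + 1).toNat)
      (by omega) (by omega)
    rw [Int.toNat_of_nonneg (by omega), Int.toNat_of_nonneg (by omega), add_sub_cancel_right,
      add_sub_cancel_right] at hval
    simp only [ofPHF, mem_ofPred_eq, hO.mem_iff, hP, true_and, hval]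
    omega
  · exact iff_of_false (fun hk => hP hk.1) (fun hk => hP (hO.1 hk))

end OfPHF

theorem ideal_bijects_with_phf_general (m n : ℕ) :
    Set.BijOn (idealToPHF m n) {O | IsOI m n O} {h | IsPHF m n h} :=
  Set.InvOn.bijOn (f' := ofPHF m n)
    ⟨fun _ hO => ofPHF_idealToPHF hO, fun _ hh => idealToPHF_ofPHF hh⟩
    (fun _ hO => isPHF_idealToPHF hO) (fun _ hh => isOI_ofPHF hh)

/-- The map `O ↦ (h i j)` with `h 0 k = k`, `h ℓ 0 = ℓ` and
`h i j = i + j - 2|O ∩ C_{i,j}|` is a bijection from `J(P_{m,n})` onto the set of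
`(m,n)`-partial height-function matrices. -/
theorem ideal_bijects_with_phf (m n : ℕ) (hm : 1 ≤ m) (hn : 1 ≤ n) :
    Set.BijOn (idealToPHF m n) {O | IsOI m n O} {h | IsPHF m n h} :=
  ideal_bijects_with_phf_general m n
end

section
/- For m,n ≥ 1, the number of m×n partial alternating sign matrices whose entries sum to 1 equals C(m+n, m) − 1 (a binomial coefficient minus one). -/
namespace PASMAux

open Finset

/-- rank of `x` in finset `s`: number of elements of `s` that are `≤ x`. -/
def rk (s : Finset ℕ) (x : ℕ) : ℕ := (s.filter (fun z => z ≤ x)).card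

/-- the staircase matrix associated to a pair of finsets. -/
def S (I J : Finset ℕ) (i j : ℕ) : ℤ :=
  if i ∈ I ∧ j ∈ J then
    if rk I i = rk J j then 1 else if rk I i = rk J j + 1 then -1 else 0
  else 0

lemma rk_le_card (I : Finset ℕ) (x : ℕ) : rk I x ≤ I.card :=
  card_le_card (filter_subset _ _)

lemma rk_pos {I : Finset ℕ} {x : ℕ} (hx : x ∈ I) : 1 ≤ rk I x := by
  have : x ∈ I.filter (fun z => z ≤ x) := mem_filter.2 ⟨hx, le_refl x⟩
  exact card_pos.2 ⟨x, this⟩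

lemma rk_mono (I : Finset ℕ) {x y : ℕ} (h : x ≤ y) : rk I x ≤ rk I y :=
  card_le_card (fun z hz => mem_filter.2 ⟨(mem_filter.1 hz).1, le_trans (mem_filter.1 hz).2 h⟩)

lemma rk_lt_rk {I : Finset ℕ} {x y : ℕ} (hy : y ∈ I) (hxy : x < y) : rk I x < rk I y := by
  apply card_lt_card
  constructor
  · exact fun z hz => mem_filter.2 ⟨(mem_filter.1 hz).1, le_trans (mem_filter.1 hz).2 hxy.le⟩
  · intro hsub
    have : y ∈ I.filter (fun z => z ≤ x) := hsub (mem_filter.2 ⟨hy, le_refl y⟩)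
    exact absurd (mem_filter.1 this).2 (not_le.2 hxy)

lemma rk_injOn {I : Finset ℕ} {x y : ℕ} (hx : x ∈ I) (hy : y ∈ I)
    (h : rk I x = rk I y) : x = y := by
  rcases lt_trichotomy x y with h1 | h1 | h1
  · exact absurd h (Nat.ne_of_lt (rk_lt_rk hy h1))
  · exact h1
  · exact absurd h.symm (Nat.ne_of_lt (rk_lt_rk hx h1))

lemma lt_of_rk_lt {I : Finset ℕ} {x y : ℕ} (hx : x ∈ I) (hy : y ∈ I)
    (h : rk I x < rk I y) : x < y := by
  rcases lt_trichotomy x y with h1 | h1 | h1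
  · exact h1
  · subst h1; omega
  · exact absurd (rk_lt_rk hx h1) (by omega)

lemma rk_surj {I : Finset ℕ} {t : ℕ} (h1 : 1 ≤ t) (h2 : t ≤ I.card) :
    ∃ x ∈ I, rk I x = t := by
  have himg : I.image (rk I) = Finset.Icc 1 I.card := by
    apply Finset.eq_of_subset_of_card_le
    · intro v hv
      rcases mem_image.1 hv with ⟨x, hx, rfl⟩
      exact Finset.mem_Icc.2 ⟨rk_pos hx, rk_le_card I x⟩
    · rw [Nat.card_Icc]
      rw [Finset.card_image_of_injOn (fun x hx y hy h => rk_injOn hx hy h)]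
      omega
  have : t ∈ I.image (rk I) := by
    rw [himg]; exact Finset.mem_Icc.2 ⟨h1, h2⟩
  rcases mem_image.1 this with ⟨x, hx, hxt⟩
  exact ⟨x, hx, hxt⟩

lemma rk_filter_card (I : Finset ℕ) (t : ℕ) :
    (I.filter (fun x => rk I x = t)).card = if 1 ≤ t ∧ t ≤ I.card then 1 else 0 := by
  split_ifs with h
  · rcases rk_surj h.1 h.2 with ⟨x, hx, hxt⟩
    rw [Finset.card_eq_one]
    exact ⟨x, Finset.ext (fun y => by
      simp only [mem_filter, mem_singleton]
      constructor
      · rintro ⟨hy, hyt⟩; exact rk_injOn hy hx (hyt.trans hxt.symm)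
      · rintro rfl; exact ⟨hx, hxt⟩)⟩
  · rw [Finset.card_eq_zero, Finset.filter_eq_empty_iff]
    intro x hx h2
    exact h ⟨h2 ▸ rk_pos hx, h2 ▸ rk_le_card I x⟩

lemma rk_insert {I : Finset ℕ} {a : ℕ} (ha : a ∉ I) (x : ℕ) :
    rk (insert a I) x = rk I x + if a ≤ x then 1 else 0 := by
  unfold rk
  rw [Finset.filter_insert]
  split_ifs with h
  · rw [Finset.card_insert_of_notMem (fun hc => ha (Finset.mem_of_mem_filter a hc))]
  · rfl

lemma rk_eq_card {I : Finset ℕ} {x : ℕ} (h : ∀ b ∈ I, b ≤ x) : rk I x = I.card := by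
  unfold rk
  rw [Finset.filter_true_of_mem h]


lemma sum_ind (J : Finset ℕ) (t : ℕ) :
    ∑ j ∈ J, (if rk J j = t then (1:ℤ) else 0) = if 1 ≤ t ∧ t ≤ J.card then 1 else 0 := by
  rw [Finset.sum_boole, rk_filter_card]
  split_ifs <;> simp

lemma S_apply_notMem_left {I J : Finset ℕ} {i j : ℕ} (hi : i ∉ I) : S I J i j = 0 := by
  unfold S; rw [if_neg (fun h => hi h.1)]

lemma S_apply_notMem_right {I J : Finset ℕ} {i j : ℕ} (hj : j ∉ J) : S I J i j = 0 := by
  unfold S; rw [if_neg (fun h => hj h.2)]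

lemma S_term_split {I J : Finset ℕ} {i j : ℕ} (hi : i ∈ I) (hj : j ∈ J) :
    S I J i j = (if rk J j = rk I i then (1:ℤ) else 0)
      - (if rk J j + 1 = rk I i then (1:ℤ) else 0) := by
  unfold S
  rw [if_pos ⟨hi, hj⟩]
  split_ifs <;> omega

lemma S_row_sum {I J : Finset ℕ} {n : ℕ} (hJn : J ⊆ Finset.range n)
    (hcard : I.card = J.card) {i : ℕ} (hi : i ∈ I) :
    ∑ j ∈ Finset.range n, S I J i j = if rk I i = 1 then 1 else 0 := by
  rw [← Finset.sum_subset hJn (fun x _ hx => S_apply_notMem_right hx)]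
  have : ∀ j ∈ J, S I J i j = (if rk J j = rk I i then (1:ℤ) else 0)
      - (if rk J j = rk I i - 1 then (1:ℤ) else 0) := by
    intro j hj
    rw [S_term_split hi hj]
    congr 1
    have h1 : 1 ≤ rk I i := by
      have : i ∈ I.filter (fun z => z ≤ i) := mem_filter.2 ⟨hi, le_refl i⟩
      exact Finset.card_pos.2 ⟨i, this⟩
    by_cases h : rk J j + 1 = rk I i
    · rw [if_pos h, if_pos (by omega)]
    · rw [if_neg h, if_neg (by omega)]
  rw [Finset.sum_congr rfl this, Finset.sum_sub_distrib, sum_ind, sum_ind]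
  have h1 : 1 ≤ rk I i := by
    have : i ∈ I.filter (fun z => z ≤ i) := mem_filter.2 ⟨hi, le_refl i⟩
    exact Finset.card_pos.2 ⟨i, this⟩
  have h2 : rk I i ≤ J.card := hcard ▸ Finset.card_le_card (filter_subset _ _)
  rw [if_pos ⟨h1, h2⟩]
  split_ifs with hA hB hB <;> omega

lemma S_col_sum {I J : Finset ℕ} {m : ℕ} (hIm : I ⊆ Finset.range m)
    (hcard : I.card = J.card) {j : ℕ} (hj : j ∈ J) :
    ∑ i ∈ Finset.range m, S I J i j = if rk J j = J.card then 1 else 0 := by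
  rw [← Finset.sum_subset hIm (fun x _ hx => S_apply_notMem_left hx)]
  have : ∀ i ∈ I, S I J i j = (if rk I i = rk J j then (1:ℤ) else 0)
      - (if rk I i = rk J j + 1 then (1:ℤ) else 0) := by
    intro i hi
    rw [S_term_split hi hj]
    congr 1
    · split_ifs with hA hB hB <;> omega
    · split_ifs with hA hB hB <;> first | rfl | omega
  rw [Finset.sum_congr rfl this, Finset.sum_sub_distrib, sum_ind, sum_ind]
  have h1 : 1 ≤ rk J j := by
    have : j ∈ J.filter (fun z => z ≤ j) := mem_filter.2 ⟨hj, le_refl j⟩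
    exact Finset.card_pos.2 ⟨j, this⟩
  have h2 : rk J j ≤ I.card := hcard ▸ Finset.card_le_card (filter_subset _ _)
  rw [if_pos ⟨h1, h2⟩]
  split_ifs with hA hB hB <;> omega


lemma S_cases {I J : Finset ℕ} {i j : ℕ} (h : S I J i j ≠ 0) :
    i ∈ I ∧ j ∈ J ∧ (rk I i = rk J j ∨ rk I i = rk J j + 1) := by
  unfold S at h
  by_cases hm : i ∈ I ∧ j ∈ J
  · refine ⟨hm.1, hm.2, ?_⟩
    rw [if_pos hm] at h
    split_ifs at h with h1 h2
    · exact Or.inl h1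
    · exact Or.inr h2
    · exact absurd rfl h
  · rw [if_neg hm] at h; exact absurd rfl h

lemma S_val_plus {I J : Finset ℕ} {i j : ℕ} (hi : i ∈ I) (hj : j ∈ J)
    (h : rk I i = rk J j) : S I J i j = 1 := by
  unfold S; rw [if_pos ⟨hi, hj⟩, if_pos h]

lemma S_val_minus {I J : Finset ℕ} {i j : ℕ} (hi : i ∈ I) (hj : j ∈ J)
    (h : rk I i = rk J j + 1) : S I J i j = -1 := by
  unfold S; rw [if_pos ⟨hi, hj⟩, if_neg (by omega), if_pos h]

theorem isPASM_S {m n : ℕ} {I J : Finset ℕ} (hIm : I ⊆ Finset.range m)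
    (hJn : J ⊆ Finset.range n) (hcard : I.card = J.card) (hne : I.Nonempty) :
    IsPASM m n (S I J) ∧ (∑ i ∈ Finset.range m, ∑ j ∈ Finset.range n, S I J i j) = 1 := by
  constructor
  · refine ⟨?_, ?_, ?_, ?_, ?_, ?_, ?_, ?_⟩
    · -- support
      intro i j h
      rcases h with h | h
      · exact S_apply_notMem_left (fun hc => by have := mem_range.1 (hIm hc); omega)
      · exact S_apply_notMem_right (fun hc => by have := mem_range.1 (hJn hc); omega)
    · -- entries
      intro i j _ _
      unfold S
      split_ifs <;> simp
    · -- row sums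
      intro i _
      by_cases hi : i ∈ I
      · rw [S_row_sum hJn hcard hi]
        split_ifs
        · right; rfl
        · left; rfl
      · left
        exact Finset.sum_eq_zero (fun j _ => S_apply_notMem_left hi)
    · -- col sums
      intro j _
      by_cases hj : j ∈ J
      · rw [S_col_sum hIm hcard hj]
        split_ifs
        · right; rfl
        · left; rfl
      · left
        exact Finset.sum_eq_zero (fun i _ => S_apply_notMem_right hj)
    · -- row alternation
      intro i j₁ j₂ _ hlt _ h1 h2 _
      obtain ⟨hi, hj₁, hc1⟩ := S_cases h1
      obtain ⟨-, hj₂, hc2⟩ := S_cases h2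
      have ht : rk J j₁ < rk J j₂ := rk_lt_rk hj₂ hlt
      have e1 : rk I i = rk J j₁ + 1 := by omega
      have e2 : rk I i = rk J j₂ := by omega
      rw [S_val_plus hi hj₂ e2, S_val_minus hi hj₁ e1]; ring
    · -- col alternation
      intro j i₁ i₂ _ hlt _ h1 h2 _
      obtain ⟨hi₁, hj, hc1⟩ := S_cases h1
      obtain ⟨hi₂, -, hc2⟩ := S_cases h2
      have ht : rk I i₁ < rk I i₂ := rk_lt_rk hi₂ hlt
      have e1 : rk I i₁ = rk J j := by omega
      have e2 : rk I i₂ = rk J j + 1 := by omega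
      rw [S_val_plus hi₁ hj e1, S_val_minus hi₂ hj e2]
    · -- first nonzero of column
      intro i j _ _ h hzero
      obtain ⟨hi, hj, hc⟩ := S_cases h
      rcases hc with hc | hc
      · exact S_val_plus hi hj hc
      · exfalso
        have h1 : 1 ≤ rk J j := rk_pos hj
        have h2 : rk J j ≤ I.card := by have := rk_le_card I i; omega
        obtain ⟨i', hi', hri'⟩ := rk_surj h1 h2
        have hlt : i' < i := lt_of_rk_lt hi' hi (by omega)
        have : S I J i' j = 1 := S_val_plus hi' hj (by omega)
        have := hzero i' hlt
        omega
    · -- last nonzero of row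
      intro i j _ _ h hzero
      obtain ⟨hi, hj, hc⟩ := S_cases h
      rcases hc with hc | hc
      · exact S_val_plus hi hj hc
      · exfalso
        have h2 : rk J j + 1 ≤ J.card := by
          have := rk_le_card I i; omega
        obtain ⟨j', hj', hrj'⟩ := rk_surj (t := rk J j + 1) (by omega) h2
        have hlt : j < j' := lt_of_rk_lt hj hj' (by omega)
        have hn : j' < n := mem_range.1 (hJn hj')
        have : S I J i j' = 1 := S_val_plus hi hj' (by omega)
        have := hzero j' hlt hn
        omega
  · -- total sum = 1
    rw [← Finset.sum_subset hIm (fun x _ hx =>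
      Finset.sum_eq_zero (fun j _ => S_apply_notMem_left hx))]
    rw [Finset.sum_congr rfl (fun i hi => S_row_sum hJn hcard hi)]
    have : ∀ i ∈ I, (if rk I i = 1 then (1:ℤ) else 0) = (if rk I i = 1 then (1:ℤ) else 0) := fun _ _ => rfl
    rw [sum_ind I 1]
    rw [if_pos ⟨le_refl 1, Finset.card_pos.2 hne⟩]


lemma mem_left_iff {I J : Finset ℕ} (hcard : I.card = J.card) (i : ℕ) :
    i ∈ I ↔ ∃ j, S I J i j ≠ 0 := by
  constructor
  · intro hi
    obtain ⟨j, hj, hrj⟩ := rk_surj (t := rk I i) (rk_pos hi) (hcard ▸ rk_le_card I i)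
    exact ⟨j, by rw [S_val_plus hi hj hrj.symm]; omega⟩
  · rintro ⟨j, hj⟩
    exact (S_cases hj).1

lemma mem_right_iff {I J : Finset ℕ} (hcard : I.card = J.card) (j : ℕ) :
    j ∈ J ↔ ∃ i, S I J i j ≠ 0 := by
  constructor
  · intro hj
    obtain ⟨i, hi, hri⟩ := rk_surj (t := rk J j) (rk_pos hj) (hcard.symm ▸ rk_le_card J j)
    exact ⟨i, by rw [S_val_plus hi hj hri]; omega⟩
  · rintro ⟨i, hi⟩
    exact (S_cases hi).2.1

lemma S_inj {I J I' J' : Finset ℕ} (h1 : I.card = J.card) (h2 : I'.card = J'.card)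
    (h : S I J = S I' J') : I = I' ∧ J = J' := by
  constructor
  · ext i
    rw [mem_left_iff h1, mem_left_iff h2, h]
  · ext j
    rw [mem_right_iff h1, mem_right_iff h2, h]

/-- the parametrizing finset. -/
def T (m n : ℕ) : Finset (Finset ℕ × Finset ℕ) :=
  ((Finset.range m).powerset ×ˢ (Finset.range n).powerset).filter
    (fun p => p.1.card = p.2.card ∧ p.1.Nonempty)

lemma card_T (m n : ℕ) (hm : 1 ≤ m) (hn : 1 ≤ n) :
    (T m n).card = (m + n).choose m - 1 := by
  classical
  set T0 : Finset (Finset ℕ × Finset ℕ) :=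
    ((Finset.range m).powerset ×ˢ (Finset.range n).powerset).filter
      (fun p => p.1.card = p.2.card) with hT0
  have hmem : (∅, (∅ : Finset ℕ)) ∈ T0 := by
    simp [hT0]
  have hnotmem : (∅, (∅ : Finset ℕ)) ∉ T m n := by
    simp [T]
  have hins : T0 = insert (∅, ∅) (T m n) := by
    ext p
    simp only [hT0, T, mem_filter, mem_insert, mem_product, mem_powerset]
    constructor
    · rintro ⟨hp, hc⟩
      by_cases he : p.1 = ∅
      · left
        have : p.2 = ∅ := by
          rw [← Finset.card_eq_zero, ← hc, he]; simp
        exact Prod.ext_iff.mpr ⟨he, this⟩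
      · right
        exact ⟨hp, hc, Finset.nonempty_of_ne_empty he⟩
    · rintro (rfl | ⟨hp, hc, _⟩)
      · simp
      · exact ⟨hp, hc⟩
  have hcard0 : T0.card = (T m n).card + 1 := by
    rw [hins, Finset.card_insert_of_notMem hnotmem]
  -- T0 as a biUnion over k
  have hbi : T0 = (Finset.range (m+1)).biUnion
      (fun k => (Finset.powersetCard k (Finset.range m)) ×ˢ
        (Finset.powersetCard k (Finset.range n))) := by
    ext p
    simp only [hT0, mem_filter, mem_product, mem_powerset, mem_biUnion, mem_range,
      Finset.mem_powersetCard]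
    constructor
    · rintro ⟨⟨hp1, hp2⟩, hc⟩
      refine ⟨p.1.card, ?_, ⟨hp1, rfl⟩, ⟨hp2, hc.symm⟩⟩
      have := Finset.card_le_card hp1
      simp only [Finset.card_range] at this
      omega
    · rintro ⟨k, _, ⟨hp1, hk1⟩, ⟨hp2, hk2⟩⟩
      exact ⟨⟨hp1, hp2⟩, by omega⟩
  have hdisj : ∀ x ∈ Finset.range (m+1), ∀ y ∈ Finset.range (m+1), x ≠ y →
      Disjoint ((Finset.powersetCard x (Finset.range m)) ×ˢ
        (Finset.powersetCard x (Finset.range n)))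
        ((Finset.powersetCard y (Finset.range m)) ×ˢ
        (Finset.powersetCard y (Finset.range n))) := by
    intro x _ y _ hxy
    rw [Finset.disjoint_left]
    rintro p hp hq
    simp only [mem_product, Finset.mem_powersetCard] at hp hq
    exact hxy (hp.1.2.symm.trans hq.1.2)
  have hsum : T0.card = ∑ k ∈ Finset.range (m+1), m.choose k * n.choose k := by
    rw [hbi, Finset.card_biUnion hdisj]
    refine Finset.sum_congr rfl (fun k _ => ?_)
    rw [Finset.card_product, Finset.card_powersetCard, Finset.card_powersetCard,
      Finset.card_range, Finset.card_range]
  -- Vandermonde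
  have hvan : (m + n).choose m = ∑ k ∈ Finset.range (m+1), m.choose k * n.choose k := by
    rw [Nat.add_choose_eq m n m, Finset.Nat.sum_antidiagonal_eq_sum_range_succ_mk]
    rw [← Finset.sum_range_reflect]
    refine Finset.sum_congr rfl (fun k hk => ?_)
    simp only [mem_range] at hk
    have hk' : k ≤ m := by omega
    have h1 : m + 1 - 1 - k = m - k := by omega
    have h2 : m - (m - k) = k := by omega
    rw [h1, h2, Nat.choose_symm hk']
  omega


lemma col_inv {m n : ℕ} {M : ℕ → ℕ → ℤ} (hM : IsPASM m n M) {j : ℕ} (hj : j < n) (N : ℕ) :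
    ((∀ i', i' < N → M i' j = 0) ∧ ∑ i ∈ Finset.range N, M i j = 0)
  ∨ (∃ i₀, i₀ < N ∧ M i₀ j = 1 ∧ (∀ i', i₀ < i' → i' < N → M i' j = 0) ∧
      ∑ i ∈ Finset.range N, M i j = 1)
  ∨ (∃ i₀, i₀ < N ∧ M i₀ j = -1 ∧ (∀ i', i₀ < i' → i' < N → M i' j = 0) ∧
      ∑ i ∈ Finset.range N, M i j = 0) := by
  obtain ⟨hsupp, hent, _, _, _, haltc, hfirst, _⟩ := hM
  induction N with
  | zero => exact Or.inl ⟨fun i' h => absurd h (Nat.not_lt_zero i'), by simp⟩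
  | succ N ih =>
    by_cases hz : M N j = 0
    · rcases ih with ⟨h1, h2⟩ | ⟨i₀, h0, h1, h2, h3⟩ | ⟨i₀, h0, h1, h2, h3⟩
      · refine Or.inl ⟨?_, ?_⟩
        · intro i' hi'
          rcases Nat.lt_succ_iff_lt_or_eq.1 hi' with h | rfl
          · exact h1 i' h
          · exact hz
        · rw [Finset.sum_range_succ, h2, hz]; ring
      · refine Or.inr (Or.inl ⟨i₀, by omega, h1, ?_, ?_⟩)
        · intro i' hi1 hi2
          rcases Nat.lt_succ_iff_lt_or_eq.1 hi2 with h | rfl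
          · exact h2 i' hi1 h
          · exact hz
        · rw [Finset.sum_range_succ, h3, hz]; ring
      · refine Or.inr (Or.inr ⟨i₀, by omega, h1, ?_, ?_⟩)
        · intro i' hi1 hi2
          rcases Nat.lt_succ_iff_lt_or_eq.1 hi2 with h | rfl
          · exact h2 i' hi1 h
          · exact hz
        · rw [Finset.sum_range_succ, h3, hz]; ring
    · have hNm : N < m := by
        by_contra hc
        exact hz (hsupp N j (Or.inl (by omega)))
      have hval : M N j = -1 ∨ M N j = 1 := by
        rcases hent N j hNm hj with h | h | h
        · exact Or.inl h
        · exact absurd h hz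
        · exact Or.inr h
      rcases ih with ⟨h1, h2⟩ | ⟨i₀, h0, h1, h2, h3⟩ | ⟨i₀, h0, h1, h2, h3⟩
      · -- no nonzero before N: M N j = 1 by hfirst
        have : M N j = 1 := hfirst N j hNm hj hz h1
        refine Or.inr (Or.inl ⟨N, Nat.lt_succ_self N, this, fun i' hi1 hi2 => by omega, ?_⟩)
        rw [Finset.sum_range_succ, h2, this]; ring
      · -- last nonzero was +1 at i₀ ⇒ M N j = -1
        have halt : M N j = -M i₀ j := haltc j i₀ N hj h0 hNm (by rw [h1]; omega) hz h2
        have : M N j = -1 := by rw [halt, h1]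
        refine Or.inr (Or.inr ⟨N, Nat.lt_succ_self N, this, fun i' hi1 hi2 => by omega, ?_⟩)
        rw [Finset.sum_range_succ, h3, this]; ring
      · -- last nonzero was -1 at i₀ ⇒ M N j = 1
        have halt : M N j = -M i₀ j := haltc j i₀ N hj h0 hNm (by rw [h1]; omega) hz h2
        have : M N j = 1 := by rw [halt, h1]; ring
        refine Or.inr (Or.inl ⟨N, Nat.lt_succ_self N, this, fun i' hi1 hi2 => by omega, ?_⟩)
        rw [Finset.sum_range_succ, h3, this]; ring

lemma col_sum_bottom_neg {m n : ℕ} {M : ℕ → ℕ → ℤ} (hM : IsPASM m n M) {j : ℕ} (hj : j < n)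
    {i₀ : ℕ} (h₀ : M i₀ j = -1) (hbot : ∀ i', i₀ < i' → M i' j = 0) :
    ∑ i ∈ Finset.range m, M i j = 0 := by
  have hi₀m : i₀ < m := by
    by_contra hc
    have := hM.1 i₀ j (Or.inl (by omega))
    omega
  rcases col_inv hM hj m with ⟨h1, h2⟩ | ⟨i₁, k0, k1, k2, k3⟩ | ⟨i₁, k0, k1, k2, k3⟩
  · have := h1 i₀ hi₀m; omega
  · exfalso
    rcases lt_trichotomy i₀ i₁ with h | rfl | h
    · have := hbot i₁ h; omega
    · omega
    · have := k2 i₀ h hi₀m; omega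
  · exact k3

lemma col_sum_bottom_pos {m n : ℕ} {M : ℕ → ℕ → ℤ} (hM : IsPASM m n M) {j : ℕ} (hj : j < n)
    {i₀ : ℕ} (h₀ : M i₀ j = 1) (hbot : ∀ i', i₀ < i' → M i' j = 0) :
    ∑ i ∈ Finset.range m, M i j = 1 := by
  have hi₀m : i₀ < m := by
    by_contra hc
    have := hM.1 i₀ j (Or.inl (by omega))
    omega
  rcases col_inv hM hj m with ⟨h1, h2⟩ | ⟨i₁, k0, k1, k2, k3⟩ | ⟨i₁, k0, k1, k2, k3⟩
  · have := h1 i₀ hi₀m; omega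
  · exact k3
  · exfalso
    rcases lt_trichotomy i₀ i₁ with h | rfl | h
    · have := hbot i₁ h; omega
    · omega
    · have := k2 i₀ h hi₀m; omega


lemma S_val_zero {I J : Finset ℕ} {i j : ℕ} (h1 : rk I i ≠ rk J j)
    (h2 : rk I i ≠ rk J j + 1) : S I J i j = 0 := by
  unfold S
  split_ifs <;> first | rfl | omega

lemma exists_least {P : ℕ → Prop} (h : ∃ x, P x) :
    ∃ x, P x ∧ ∀ y, y < x → ¬ P y := by
  classical
  exact ⟨Nat.find h, Nat.find_spec h, fun y hy => Nat.find_min h hy⟩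

lemma exists_greatest {P : ℕ → Prop} {b : ℕ} (h : ∃ x, x < b ∧ P x) :
    ∃ x, x < b ∧ P x ∧ ∀ y, x < y → y < b → ¬ P y := by
  classical
  obtain ⟨x, hxb, hx⟩ := h
  have hspec := Nat.findGreatest_spec (P := fun y => y < b ∧ P y) (le_of_lt hxb) ⟨hxb, hx⟩
  exact ⟨Nat.findGreatest (fun y => y < b ∧ P y) b, hspec.1, hspec.2,
    fun y h1 h2 hy => Nat.findGreatest_is_greatest h1 (le_of_lt h2) ⟨h2, hy⟩⟩

lemma rk_singleton_self (x : ℕ) : rk {x} x = 1 := by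
  unfold rk
  rw [Finset.filter_true_of_mem (by intro a ha; rw [Finset.mem_singleton] at ha; omega)]
  simp

theorem pasm_to_stair {m n : ℕ} (q : ℕ) :
    ∀ M : ℕ → ℕ → ℤ, IsPASM m n M →
      (∑ i ∈ Finset.range m, ∑ j ∈ Finset.range n, M i j) = 1 →
      ((Finset.range m ×ˢ Finset.range n).filter (fun p => M p.1 p.2 = -1)).card = q →
      ∃ I J : Finset ℕ, I ⊆ Finset.range m ∧ J ⊆ Finset.range n ∧
        I.card = J.card ∧ I.Nonempty ∧ M = S I J := by
  induction q with
  | zero =>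
    intro M hM hsum hq
    obtain ⟨hsupp, hent, _, _, _, _, _, _⟩ := hM
    have hno : ∀ p ∈ Finset.range m ×ˢ Finset.range n, ¬ M p.1 p.2 = -1 :=
      Finset.filter_eq_empty_iff.1 (Finset.card_eq_zero.1 hq)
    set A := (Finset.range m ×ˢ Finset.range n).filter (fun p => M p.1 p.2 ≠ 0) with hA
    have hA1 : ∀ p ∈ A, M p.1 p.2 = 1 := by
      intro p hp
      rw [hA, Finset.mem_filter, Finset.mem_product] at hp
      obtain ⟨⟨h1, h2⟩, h3⟩ := hp
      rcases hent p.1 p.2 (mem_range.1 h1) (mem_range.1 h2) with h | h | h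
      · exact absurd h (hno p (Finset.mem_product.2 ⟨h1, h2⟩))
      · exact absurd h h3
      · exact h
    have hsum' : ∑ p ∈ Finset.range m ×ˢ Finset.range n, M p.1 p.2 = 1 := by
      rw [Finset.sum_product]; exact hsum
    have hsumA : ∑ p ∈ A, M p.1 p.2 = 1 := by
      rw [← hsum', hA]
      apply Finset.sum_subset (Finset.filter_subset _ _)
      intro p hp hpA
      by_contra hc
      exact hpA (Finset.mem_filter.2 ⟨hp, hc⟩)
    have hcardA : (A.card : ℤ) = 1 := by
      rw [← hsumA, Finset.sum_congr rfl hA1]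
      simp
    obtain ⟨p₀, hp₀⟩ := Finset.card_eq_one.1 (by exact_mod_cast hcardA)
    have hp₀A : p₀ ∈ A := hp₀ ▸ Finset.mem_singleton_self p₀
    have hm1 : M p₀.1 p₀.2 = 1 := hA1 p₀ hp₀A
    have hp₀A' := hp₀A
    rw [hA, Finset.mem_filter, Finset.mem_product] at hp₀A'
    have hp₀r := hp₀A'.1
    have hzero : ∀ a b, ¬(a = p₀.1 ∧ b = p₀.2) → M a b = 0 := by
      intro a b hab
      by_contra hc
      by_cases hr : a ∈ Finset.range m ∧ b ∈ Finset.range n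
      · have hmem : (a, b) ∈ A := by
          rw [hA]
          exact Finset.mem_filter.2 ⟨Finset.mem_product.2 hr, hc⟩
        rw [hp₀, Finset.mem_singleton] at hmem
        exact hab ⟨congrArg Prod.fst hmem, congrArg Prod.snd hmem⟩
      · rw [Finset.mem_range, Finset.mem_range] at hr
        exact hc (hsupp a b (by omega))
    refine ⟨{p₀.1}, {p₀.2}, ?_, ?_, by simp, ⟨p₀.1, Finset.mem_singleton_self _⟩, ?_⟩
    · rw [Finset.singleton_subset_iff]; exact hp₀r.1
    · rw [Finset.singleton_subset_iff]; exact hp₀r.2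
    · funext a b
      by_cases hab : a = p₀.1 ∧ b = p₀.2
      · rw [hab.1, hab.2, hm1,
          S_val_plus (Finset.mem_singleton_self _) (Finset.mem_singleton_self _)
            (by rw [rk_singleton_self, rk_singleton_self])]
      · rw [hzero a b hab]
        symm
        by_cases ha : a = p₀.1
        · have hb : b ≠ p₀.2 := fun h => hab ⟨ha, h⟩
          exact S_apply_notMem_right (by simp [hb])
        · exact S_apply_notMem_left (by simp [ha])
  | succ q ih =>
    intro M hM hsum hq
    obtain ⟨hsupp, hent, hrow, hcol, haltr, haltc, hfirst, hlast⟩ := hM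
    set D := (Finset.range m ×ˢ Finset.range n).filter (fun p => M p.1 p.2 = -1) with hD
    have hDne : D.Nonempty := Finset.card_pos.1 (by omega)
    have hD1ne : (D.image Prod.fst).Nonempty := hDne.image _
    set i := (D.image Prod.fst).max' hD1ne with hi
    have hiD : ∃ p ∈ D, p.1 = i := by
      have := (D.image Prod.fst).max'_mem hD1ne
      rw [← hi] at this
      rcases Finset.mem_image.1 this with ⟨p, hp, hpi⟩
      exact ⟨p, hp, hpi⟩
    set Di := D.filter (fun p => p.1 = i) with hDi
    have hDine : Di.Nonempty := by
      rcases hiD with ⟨p, hp, hpi⟩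
      exact ⟨p, Finset.mem_filter.2 ⟨hp, hpi⟩⟩
    have hD2ne : (Di.image Prod.snd).Nonempty := hDine.image _
    set j := (Di.image Prod.snd).max' hD2ne with hj
    have hdD : (i, j) ∈ D := by
      have := (Di.image Prod.snd).max'_mem hD2ne
      rw [← hj] at this
      rcases Finset.mem_image.1 this with ⟨p, hp, hpj⟩
      rw [hDi, Finset.mem_filter] at hp
      have : (p.1, p.2) = (i, j) := by rw [hp.2, hpj]
      rw [← this]
      exact hp.1
    have hdD' := hdD
    rw [hD, Finset.mem_filter, Finset.mem_product, Finset.mem_range, Finset.mem_range] at hdD'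
    obtain ⟨⟨him', hjn'⟩, hMij'⟩ := hdD'
    have him : i < m := him'
    have hjn : j < n := hjn'
    have hMij : M i j = -1 := hMij'
    -- no -1 strictly below row i
    have hnolow : ∀ a b, i < a → M a b ≠ -1 := by
      intro a b ha hc
      have ham : a < m := by
        by_contra h
        have := hsupp a b (Or.inl (by omega)); omega
      have hbn : b < n := by
        by_contra h
        have := hsupp a b (Or.inr (by omega)); omega
      have : (a, b) ∈ D := by
        rw [hD]
        exact Finset.mem_filter.2 ⟨Finset.mem_product.2
          ⟨Finset.mem_range.2 ham, Finset.mem_range.2 hbn⟩, hc⟩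
      have hmem : a ∈ D.image Prod.fst := Finset.mem_image.2 ⟨(a, b), this, rfl⟩
      have hle := Finset.le_max' (D.image Prod.fst) a hmem
      rw [← hi] at hle
      omega
    -- no -1 in row i to the right of j
    have hnoright : ∀ b, j < b → M i b ≠ -1 := by
      intro b hb hc
      have hbn : b < n := by
        by_contra h
        have := hsupp i b (Or.inr (by omega)); omega
      have : (i, b) ∈ Di := by
        rw [hDi, hD]
        refine Finset.mem_filter.2 ⟨Finset.mem_filter.2 ⟨Finset.mem_product.2
          ⟨Finset.mem_range.2 him, Finset.mem_range.2 hbn⟩, hc⟩, rfl⟩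
      have hmem : b ∈ Di.image Prod.snd := Finset.mem_image.2 ⟨(i, b), this, rfl⟩
      have hle := Finset.le_max' (Di.image Prod.snd) b hmem
      rw [← hj] at hle
      omega
    -- j' : the next nonzero entry of row i after j
    have hex : ∃ b, j < b ∧ M i b ≠ 0 := by
      by_contra hcon
      push_neg at hcon
      have := hlast i j him hjn (by omega) (fun b hb _ => hcon b hb)
      omega
    obtain ⟨j', ⟨hjj', hMj'ne⟩, hj'min⟩ := exists_least hex
    have hj'n : j' < n := by
      by_contra h
      exact hMj'ne (hsupp i j' (Or.inr (by omega)))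
    have hgap : ∀ b, j < b → b < j' → M i b = 0 := by
      intro b h1 h2
      by_contra hc
      exact hj'min b h2 ⟨h1, hc⟩
    have hMij' : M i j' = 1 := by
      have := haltr i j j' him hjj' hj'n (by omega) hMj'ne hgap
      omega
    -- nothing nonzero in row i after j'
    have hlastrow : ∀ b, j' < b → M i b = 0 := by
      intro b hb
      by_contra hc
      obtain ⟨b₂, ⟨h1, h2⟩, hmin⟩ := exists_least (⟨b, hb, hc⟩ :
        ∃ x, j' < x ∧ M i x ≠ 0)
      have hb₂n : b₂ < n := by
        by_contra h
        exact h2 (hsupp i b₂ (Or.inr (by omega)))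
      have hgap2 : ∀ c, j' < c → c < b₂ → M i c = 0 := by
        intro c hc1 hc2
        by_contra hcc
        exact hmin c hc2 ⟨hc1, hcc⟩
      have := haltr i j' b₂ him h1 hb₂n (by omega) h2 hgap2
      exact hnoright b₂ (by omega) (by omega)
    -- nothing nonzero in column j' below i
    have hbelow' : ∀ a, i < a → M a j' = 0 := by
      intro a ha
      by_contra hc
      obtain ⟨a₂, ⟨h1, h2⟩, hmin⟩ := exists_least (⟨a, ha, hc⟩ :
        ∃ x, i < x ∧ M x j' ≠ 0)
      have ha₂m : a₂ < m := by
        by_contra h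
        exact h2 (hsupp a₂ j' (Or.inl (by omega)))
      have hgap2 : ∀ c, i < c → c < a₂ → M c j' = 0 := by
        intro c hc1 hc2
        by_contra hcc
        exact hmin c hc2 ⟨hc1, hcc⟩
      have := haltc j' i a₂ hj'n h1 ha₂m (by omega) h2 hgap2
      exact hnolow a₂ j' (by omega) (by omega)
    -- nothing nonzero in column j below i
    have hbelow : ∀ a, i < a → M a j = 0 := by
      intro a ha
      by_contra hc
      obtain ⟨a₂, ⟨h1, h2⟩, hmin⟩ := exists_least (⟨a, ha, hc⟩ :
        ∃ x, i < x ∧ M x j ≠ 0)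
      have ha₂m : a₂ < m := by
        by_contra h
        exact h2 (hsupp a₂ j (Or.inl (by omega)))
      have hgap2 : ∀ c, i < c → c < a₂ → M c j = 0 := by
        intro c hc1 hc2
        by_contra hcc
        exact hmin c hc2 ⟨hc1, hcc⟩
      have halt2 := haltc j i a₂ hjn h1 ha₂m (by omega) h2 hgap2
      have hMa₂1 : M a₂ j = 1 := by omega
      have hbot2 : ∀ x, a₂ < x → M x j = 0 := by
        intro x hx
        by_contra hxc
        obtain ⟨a₃, ⟨h3, h4⟩, hmin3⟩ := exists_least (⟨x, hx, hxc⟩ :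
          ∃ y, a₂ < y ∧ M y j ≠ 0)
        have ha₃m : a₃ < m := by
          by_contra h
          exact h4 (hsupp a₃ j (Or.inl (by omega)))
        have hgap3 : ∀ c, a₂ < c → c < a₃ → M c j = 0 := by
          intro c hc1 hc2
          by_contra hcc
          exact hmin3 c hc2 ⟨hc1, hcc⟩
        have := haltc j a₂ a₃ hjn h3 ha₃m (by omega) h4 hgap3
        exact hnolow a₃ j (by omega) (by omega)
      have hc1 : ∑ x ∈ Finset.range m, M x j = 1 :=
        col_sum_bottom_pos ⟨hsupp, hent, hrow, hcol, haltr, haltc, hfirst, hlast⟩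
          hjn hMa₂1 hbot2
      have hc2 : ∑ x ∈ Finset.range m, M x j' = 1 :=
        col_sum_bottom_pos ⟨hsupp, hent, hrow, hcol, haltr, haltc, hfirst, hlast⟩
          hj'n hMij' hbelow'
      have htotc : ∑ b ∈ Finset.range n, ∑ x ∈ Finset.range m, M x b = 1 := by
        rw [← Finset.sum_comm]
        exact hsum
      have hsub : ({j, j'} : Finset ℕ) ⊆ Finset.range n := by
        intro x hx
        rcases Finset.mem_insert.1 hx with rfl | hx
        · exact Finset.mem_range.2 hjn
        · rw [Finset.mem_singleton] at hx
          subst hx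
          exact Finset.mem_range.2 hj'n
      have hle := Finset.sum_le_sum_of_subset_of_nonneg hsub
        (fun b hb _ => by
          show (0:ℤ) ≤ ∑ x ∈ Finset.range m, M x b
          rcases hcol b (Finset.mem_range.1 hb) with h | h <;> omega)
      rw [Finset.sum_pair (by omega : j ≠ j'), hc1, hc2, htotc] at hle
      omega
    classical
    -- i₀ : the last nonzero entry of column j above i
    have hex0 : ∃ x, x < i ∧ M x j ≠ 0 := by
      by_contra hcon
      push_neg at hcon
      have := hfirst i j him hjn (by omega) (fun x hx => hcon x hx)
      omega
    obtain ⟨i₀, hi₀i, hMi₀ne, hgap₀'⟩ := exists_greatest hex0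
    have hgap₀ : ∀ x, i₀ < x → x < i → M x j = 0 := by
      intro x h1 h2
      by_contra hc
      exact hgap₀' x h1 h2 hc
    have hMi₀ : M i₀ j = 1 := by
      have := haltc j i₀ i hjn hi₀i him hMi₀ne (by omega) hgap₀
      omega
    -- column sums of M at j and j'
    have hMfull : IsPASM m n M :=
      ⟨hsupp, hent, hrow, hcol, haltr, haltc, hfirst, hlast⟩
    have hcolj0 : ∑ x ∈ Finset.range m, M x j = 0 :=
      col_sum_bottom_neg hMfull hjn hMij hbelow
    have hcolj'1 : ∑ x ∈ Finset.range m, M x j' = 1 :=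
      col_sum_bottom_pos hMfull hj'n hMij' hbelow'
    -- the surgery
    set M' : ℕ → ℕ → ℤ :=
      fun a b => if (a = i ∧ b = j) ∨ (a = i ∧ b = j') then 0 else M a b with hM'def
    have hM'ij : M' i j = 0 := by
      show (if (i = i ∧ j = j) ∨ (i = i ∧ j = j') then (0:ℤ) else M i j) = 0
      rw [if_pos (Or.inl ⟨rfl, rfl⟩)]
    have hM'ij' : M' i j' = 0 := by
      show (if (i = i ∧ j' = j) ∨ (i = i ∧ j' = j') then (0:ℤ) else M i j') = 0
      rw [if_pos (Or.inr ⟨rfl, rfl⟩)]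
    have hM'row : ∀ a b, a ≠ i → M' a b = M a b := by
      intro a b ha
      show (if (a = i ∧ b = j) ∨ (a = i ∧ b = j') then (0:ℤ) else M a b) = M a b
      rw [if_neg]
      rintro (⟨h, -⟩ | ⟨h, -⟩) <;> exact ha h
    have hM'col : ∀ a b, b ≠ j → b ≠ j' → M' a b = M a b := by
      intro a b h1 h2
      show (if (a = i ∧ b = j) ∨ (a = i ∧ b = j') then (0:ℤ) else M a b) = M a b
      rw [if_neg]
      rintro (⟨-, h⟩ | ⟨-, h⟩)
      · exact h1 h
      · exact h2 h
    -- pointwise decompositions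
    have hptrow : ∀ b, M' i b = M i b + (if b = j then 1 else 0)
        + (if b = j' then -1 else 0) := by
      intro b
      by_cases h1 : b = j
      · subst h1
        rw [hM'ij, hMij, if_pos rfl, if_neg (by omega)]
        ring
      · by_cases h2 : b = j'
        · subst h2
          rw [hM'ij', hMij', if_neg h1, if_pos rfl]
          ring
        · rw [hM'col i b h1 h2, if_neg h1, if_neg h2]
          ring
    have hptcolj : ∀ a, M' a j = M a j + (if a = i then 1 else 0) := by
      intro a
      by_cases ha : a = i
      · subst ha
        rw [hM'ij, hMij, if_pos rfl]
        ring
      · rw [hM'row a j ha, if_neg ha]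
        ring
    have hptcolj' : ∀ a, M' a j' = M a j' + (if a = i then -1 else 0) := by
      intro a
      by_cases ha : a = i
      · subst ha
        rw [hM'ij', hMij', if_pos rfl]
        ring
      · rw [hM'row a j' ha, if_neg ha]
        ring
    -- sums of M'
    have hrowsum : ∀ a, ∑ b ∈ Finset.range n, M' a b = ∑ b ∈ Finset.range n, M a b := by
      intro a
      by_cases ha : a = i
      · subst ha
        rw [Finset.sum_congr rfl (fun b _ => hptrow b), Finset.sum_add_distrib,
          Finset.sum_add_distrib, Finset.sum_ite_eq' (Finset.range n) j (fun _ => (1:ℤ)),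
          Finset.sum_ite_eq' (Finset.range n) j' (fun _ => (-1:ℤ)),
          if_pos (Finset.mem_range.2 hjn), if_pos (Finset.mem_range.2 hj'n)]
        ring
      · exact Finset.sum_congr rfl (fun b _ => hM'row a b ha)
    have hcolsumj : ∑ a ∈ Finset.range m, M' a j = 1 := by
      rw [Finset.sum_congr rfl (fun a _ => hptcolj a), Finset.sum_add_distrib, hcolj0,
        Finset.sum_ite_eq' (Finset.range m) i (fun _ => (1:ℤ)),
        if_pos (Finset.mem_range.2 him)]
      ring
    have hcolsumj' : ∑ a ∈ Finset.range m, M' a j' = 0 := by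
      rw [Finset.sum_congr rfl (fun a _ => hptcolj' a), Finset.sum_add_distrib, hcolj'1,
        Finset.sum_ite_eq' (Finset.range m) i (fun _ => (-1:ℤ)),
        if_pos (Finset.mem_range.2 him)]
      ring
    have hcolsum : ∀ b, b ≠ j → b ≠ j' →
        ∑ a ∈ Finset.range m, M' a b = ∑ a ∈ Finset.range m, M a b :=
      fun b h1 h2 => Finset.sum_congr rfl (fun a _ => hM'col a b h1 h2)
    have htot' : ∑ a ∈ Finset.range m, ∑ b ∈ Finset.range n, M' a b = 1 := by
      rw [Finset.sum_congr rfl (fun a _ => hrowsum a)]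
      exact hsum
    -- the nonzero entries of row i of M' lie strictly left of j
    have hrowkey : ∀ b, M' i b ≠ 0 → b < j := by
      intro b hb
      have hb1 : b ≠ j := fun h => by subst h; exact hb hM'ij
      have hb2 : b ≠ j' := fun h => by subst h; exact hb hM'ij'
      rw [hM'col i b hb1 hb2] at hb
      by_contra hge
      push_neg at hge
      rcases lt_trichotomy b j' with h | h | h
      · exact hb (hgap b (by omega) h)
      · exact hb2 h
      · exact hb (hlastrow b h)
    have hcolkeyj : ∀ a, M' a j ≠ 0 → a < i := by
      intro a ha
      have ha1 : a ≠ i := fun h => by subst h; exact ha hM'ij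
      rw [hM'row a j ha1] at ha
      by_contra hge
      push_neg at hge
      exact ha (hbelow a (by omega))
    have hcolkeyj' : ∀ a, M' a j' ≠ 0 → a < i := by
      intro a ha
      have ha1 : a ≠ i := fun h => by subst h; exact ha hM'ij'
      rw [hM'row a j' ha1] at ha
      by_contra hge
      push_neg at hge
      exact ha (hbelow' a (by omega))
    have hPASM' : IsPASM m n M' := by
      refine ⟨?_, ?_, ?_, ?_, ?_, ?_, ?_, ?_⟩
      · -- support
        intro a b hab
        rcases hab with h | h
        · rw [hM'row a b (by omega)]
          exact hsupp a b (Or.inl h)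
        · rw [hM'col a b (by omega) (by omega)]
          exact hsupp a b (Or.inr h)
      · -- entries
        intro a b ham hbn
        by_cases ha : a = i
        · subst ha
          by_cases h1 : b = j
          · subst h1; rw [hM'ij]; exact Or.inr (Or.inl rfl)
          · by_cases h2 : b = j'
            · subst h2; rw [hM'ij']; exact Or.inr (Or.inl rfl)
            · rw [hM'col i b h1 h2]; exact hent i b ham hbn
        · rw [hM'row a b ha]; exact hent a b ham hbn
      · -- row sums
        intro a ham
        rw [hrowsum a]
        exact hrow a ham
      · -- col sums
        intro b hbn
        by_cases h1 : b = j
        · subst h1; rw [hcolsumj]; exact Or.inr rfl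
        · by_cases h2 : b = j'
          · subst h2; rw [hcolsumj']; exact Or.inl rfl
          · rw [hcolsum b h1 h2]; exact hcol b hbn
      · -- row alternation
        intro a b₁ b₂ ham h12 hb₂n h1 h2 hgapz
        by_cases ha : a = i
        · subst ha
          have hb₁j : b₁ < j := hrowkey b₁ h1
          have hb₂j : b₂ < j := hrowkey b₂ h2
          have e1 : M' i b₁ = M i b₁ := hM'col i b₁ (by omega) (by omega)
          have e2 : M' i b₂ = M i b₂ := hM'col i b₂ (by omega) (by omega)
          rw [e1] at h1
          rw [e2] at h2
          rw [e1, e2]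
          apply haltr i b₁ b₂ him h12 hb₂n h1 h2
          intro c hc1 hc2
          rw [← hM'col i c (by omega) (by omega)]
          exact hgapz c hc1 hc2
        · have e : ∀ b, M' a b = M a b := fun b => hM'row a b ha
          rw [e b₁] at h1
          rw [e b₂] at h2
          rw [e b₁, e b₂]
          apply haltr a b₁ b₂ ham h12 hb₂n h1 h2
          intro c hc1 hc2
          rw [← e c]
          exact hgapz c hc1 hc2
      · -- col alternation
        intro b a₁ a₂ hbn h12 ha₂m h1 h2 hgapz
        by_cases hb : b = j ∨ b = j'
        · have hlt : ∀ a, M' a b ≠ 0 → a < i := by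
            rcases hb with rfl | rfl
            · exact hcolkeyj
            · exact hcolkeyj'
          have ha₁ := hlt a₁ h1
          have ha₂ := hlt a₂ h2
          have e : ∀ a, a ≠ i → M' a b = M a b := fun a ha => hM'row a b ha
          rw [e a₁ (by omega)] at h1
          rw [e a₂ (by omega)] at h2
          rw [e a₁ (by omega), e a₂ (by omega)]
          apply haltc b a₁ a₂ hbn h12 ha₂m h1 h2
          intro c hc1 hc2
          rw [← e c (by omega)]
          exact hgapz c hc1 hc2
        · push_neg at hb
          have e : ∀ a, M' a b = M a b := fun a => hM'col a b hb.1 hb.2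
          rw [e a₁] at h1
          rw [e a₂] at h2
          rw [e a₁, e a₂]
          apply haltc b a₁ a₂ hbn h12 ha₂m h1 h2
          intro c hc1 hc2
          rw [← e c]
          exact hgapz c hc1 hc2
      · -- first nonzero of column
        intro a b ham hbn hne hzer
        by_cases hb : b = j ∨ b = j'
        · have hlt : ∀ x, M' x b ≠ 0 → x < i := by
            rcases hb with rfl | rfl
            · exact hcolkeyj
            · exact hcolkeyj'
          have hai := hlt a hne
          have e : M' a b = M a b := hM'row a b (by omega)
          rw [e] at hne ⊢
          apply hfirst a b ham hbn hne
          intro x hx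
          rw [← hM'row x b (by omega)]
          exact hzer x hx
        · push_neg at hb
          have e : ∀ x, M' x b = M x b := fun x => hM'col x b hb.1 hb.2
          rw [e a] at hne ⊢
          apply hfirst a b ham hbn hne
          intro x hx
          rw [← e x]
          exact hzer x hx
      · -- last nonzero of row
        intro a b ham hbn hne hzer
        by_cases ha : a = i
        · subst ha
          have hbj : b < j := hrowkey b hne
          have e : M' i b = M i b := hM'col i b (by omega) (by omega)
          rw [e] at hne ⊢
          have hgm : ∀ c, b < c → c < j → M i c = 0 := by
            intro c hc1 hc2
            rw [← hM'col i c (by omega) (by omega)]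
            exact hzer c hc1 (by omega)
          have := haltr i b j him hbj hjn hne (by omega) hgm
          omega
        · have e : ∀ b, M' a b = M a b := fun b => hM'row a b ha
          rw [e b] at hne ⊢
          apply hlast a b ham hbn hne
          intro c hc1 hc2
          rw [← e c]
          exact hzer c hc1 hc2
    -- count of -1 entries of M'
    have hDM' : (Finset.range m ×ˢ Finset.range n).filter (fun p => M' p.1 p.2 = -1)
        = D.erase (i, j) := by
      ext p
      constructor
      · intro hp
        rw [Finset.mem_filter] at hp
        obtain ⟨hr, hv⟩ := hp
        have hv' : M' p.1 p.2 = -1 := hv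
        have hp1 : p.1 ≠ i ∨ (p.2 ≠ j ∧ p.2 ≠ j') := by
          by_cases h1 : p.1 = i
          · refine Or.inr ⟨?_, ?_⟩
            · intro h2; rw [h1, h2, hM'ij] at hv'; omega
            · intro h2; rw [h1, h2, hM'ij'] at hv'; omega
          · exact Or.inl h1
        have hMv : M p.1 p.2 = -1 := by
          rcases hp1 with h | h
          · rw [← hM'row p.1 p.2 h]; exact hv'
          · rw [← hM'col p.1 p.2 h.1 h.2]; exact hv'
        refine Finset.mem_erase.2 ⟨?_, ?_⟩
        · intro hc
          rw [hc] at hv'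
          have hz : M' i j = -1 := hv'
          rw [hM'ij] at hz
          omega
        · rw [hD]
          exact Finset.mem_filter.2 ⟨hr, hMv⟩
      · intro hp
        obtain ⟨hne', hmem⟩ := Finset.mem_erase.1 hp
        rw [hD, Finset.mem_filter] at hmem
        obtain ⟨hr, hv⟩ := hmem
        have hv' : M p.1 p.2 = -1 := hv
        refine Finset.mem_filter.2 ⟨hr, ?_⟩
        show M' p.1 p.2 = -1
        have h2 : ¬(p.1 = i ∧ p.2 = j') := by
          rintro ⟨ha, hb⟩
          rw [ha, hb, hMij'] at hv'
          omega
        have h1 : ¬(p.1 = i ∧ p.2 = j) := by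
          rintro ⟨ha, hb⟩
          exact hne' (Prod.ext_iff.2 ⟨ha, hb⟩)
        by_cases hcase : p.1 = i
        · rw [hM'col p.1 p.2 (fun h => h1 ⟨hcase, h⟩) (fun h => h2 ⟨hcase, h⟩)]
          exact hv'
        · rw [hM'row p.1 p.2 hcase]
          exact hv'
    have hq' : ((Finset.range m ×ˢ Finset.range n).filter
        (fun p => M' p.1 p.2 = -1)).card = q := by
      rw [hDM', Finset.card_erase_of_mem hdD, hq]
      omega
    obtain ⟨I, J, hIm, hJn, hcard, hne, hMS⟩ := ih M' hPASM' htot' hq'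
    -- identify the top of the staircase of M'
    have hiI0 : M' i₀ j = 1 := by
      rw [hM'row i₀ j (by omega)]
      exact hMi₀
    have hS1 : S I J i₀ j = 1 := by rw [← hMS]; exact hiI0
    obtain ⟨hi₀I, hjJ, hrkor⟩ := S_cases (show S I J i₀ j ≠ 0 by rw [hS1]; omega)
    have hrkeq : rk I i₀ = rk J j := by
      rcases hrkor with h | h
      · exact h
      · have := S_val_minus hi₀I hjJ h
        omega
    have hcolzero' : ∀ x, i₀ < x → M' x j = 0 := by
      intro x hx
      by_cases hxi : x = i
      · subst hxi; exact hM'ij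
      · rw [hM'row x j hxi]
        rcases lt_trichotomy x i with h | h | h
        · exact hgap₀ x hx h
        · exact absurd h hxi
        · exact hbelow x h
    have hrkK : rk I i₀ = I.card := by
      by_contra hc
      have hlt : rk I i₀ + 1 ≤ I.card := by
        have := rk_le_card I i₀
        omega
      obtain ⟨i₁, hi₁I, hr₁⟩ := rk_surj (t := rk I i₀ + 1) (by omega) hlt
      have hgt : i₀ < i₁ := lt_of_rk_lt hi₀I hi₁I (by omega)
      have hminus : S I J i₁ j = -1 := S_val_minus hi₁I hjJ (by omega)
      have hz := hcolzero' i₁ hgt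
      rw [hMS] at hz
      omega
    have hrkJK : rk J j = J.card := by rw [← hrkeq, hrkK, hcard]
    have hallI : ∀ x ∈ I, x ≤ i₀ := by
      intro x hx
      by_contra hc
      have h1 := rk_lt_rk hx (show i₀ < x by omega)
      have h2 := rk_le_card I x
      omega
    have hallJ : ∀ y ∈ J, y ≤ j := by
      intro y hy
      by_contra hc
      have h1 := rk_lt_rk hy (show j < y by omega)
      have h2 := rk_le_card J y
      omega
    have hiI : i ∉ I := fun h => by have := hallI i h; omega
    have hj'J : j' ∉ J := fun h => by have := hallJ j' h; omega
    have hrkIi : rk I i = I.card := rk_eq_card (fun b hb => by have := hallI b hb; omega)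
    have hrkJj'0 : rk J j' = J.card := rk_eq_card (fun b hb => by have := hallJ b hb; omega)
    have erkI : ∀ x, x ∈ I → rk (insert i I) x = rk I x := by
      intro x hx
      rw [rk_insert hiI, if_neg (show ¬ i ≤ x by have := hallI x hx; omega)]
      omega
    have erkIi : rk (insert i I) i = I.card + 1 := by
      rw [rk_insert hiI, if_pos (le_refl i), hrkIi]
    have erkJ : ∀ y, y ∈ J → rk (insert j' J) y = rk J y := by
      intro y hy
      rw [rk_insert hj'J, if_neg (show ¬ j' ≤ y by have := hallJ y hy; omega)]
      omega
    have erkJj' : rk (insert j' J) j' = J.card + 1 := by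
      rw [rk_insert hj'J, if_pos (le_refl j'), hrkJj'0]
    refine ⟨insert i I, insert j' J, ?_, ?_, ?_, ⟨i, Finset.mem_insert_self i I⟩, ?_⟩
    · intro x hx
      rcases Finset.mem_insert.1 hx with rfl | hx
      · exact Finset.mem_range.2 him
      · exact hIm hx
    · intro x hx
      rcases Finset.mem_insert.1 hx with rfl | hx
      · exact Finset.mem_range.2 hj'n
      · exact hJn hx
    · rw [Finset.card_insert_of_notMem hiI, Finset.card_insert_of_notMem hj'J, hcard]
    · funext a b
      by_cases ha : a = i
      · subst ha
        by_cases hb1 : b = j'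
        · rw [hb1, hMij', S_val_plus (Finset.mem_insert_self i I) (Finset.mem_insert_self j' J)
            (by rw [erkIi, erkJj', hcard])]
        · by_cases hb2 : b = j
          · rw [hb2, hMij, S_val_minus (Finset.mem_insert_self i I)
              (Finset.mem_insert_of_mem hjJ) (by rw [erkIi, erkJ j hjJ, hrkJK, hcard])]
          · have hMib : M i b = 0 := by
              rw [← hM'col i b hb2 hb1, hMS]
              exact S_apply_notMem_left hiI
            rw [hMib]
            symm
            by_cases hbJ : b ∈ J
            · apply S_val_zero
              · rw [erkIi, erkJ b hbJ]
                have := rk_le_card J b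
                omega
              · rw [erkIi, erkJ b hbJ]
                intro hc
                have hbK : rk J b = J.card := by omega
                exact hb2 (rk_injOn hbJ hjJ (by rw [hbK, hrkJK]))
            · refine S_apply_notMem_right (fun hc => ?_)
              rcases Finset.mem_insert.1 hc with h | h
              · exact hb1 h
              · exact hbJ h
      · have hMa : M a b = S I J a b := by rw [← hM'row a b ha, hMS]
        rw [hMa]
        by_cases haI : a ∈ I
        · by_cases hbJ : b ∈ J
          · unfold S
            rw [if_pos (⟨haI, hbJ⟩ : a ∈ I ∧ b ∈ J),
              if_pos (⟨Finset.mem_insert_of_mem haI, Finset.mem_insert_of_mem hbJ⟩ :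
                a ∈ insert i I ∧ b ∈ insert j' J), erkI a haI, erkJ b hbJ]
          · by_cases hbj' : b = j'
            · subst hbj'
              rw [S_apply_notMem_right hj'J]
              symm
              apply S_val_zero
              · rw [erkI a haI, erkJj']
                have := rk_le_card I a
                omega
              · rw [erkI a haI, erkJj']
                have := rk_le_card I a
                omega
            · rw [S_apply_notMem_right hbJ]
              symm
              refine S_apply_notMem_right (fun hc => ?_)
              rcases Finset.mem_insert.1 hc with h | h
              · exact hbj' h
              · exact hbJ h
        · rw [S_apply_notMem_left haI]
          symm
          refine S_apply_notMem_left (fun hc => ?_)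
          rcases Finset.mem_insert.1 hc with h | h
          · exact ha h
          · exact haI h


end PASMAux

/-- For `m, n ≥ 1`, the number of `m × n` partial alternating sign
matrices whose entries sum to 1 equals `C(m+n, m) - 1`. -/
theorem card_pasm_sum_one (m n : ℕ) (hm : 1 ≤ m) (hn : 1 ≤ n) :
    {M : ℕ → ℕ → ℤ | IsPASM m n M ∧
        (∑ i ∈ Finset.range m, ∑ j ∈ Finset.range n, M i j) = 1}.ncard =
      Nat.choose (m + n) m - 1 := by
  classical
  open Finset PASMAux in
  have hset : {M : ℕ → ℕ → ℤ | IsPASM m n M ∧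
      (∑ i ∈ Finset.range m, ∑ j ∈ Finset.range n, M i j) = 1}
      = ↑((T m n).image (fun p => S p.1 p.2)) := by
    ext M
    simp only [Set.mem_setOf_eq, Finset.coe_image, Set.mem_image, Finset.mem_coe]
    constructor
    · rintro ⟨hM, hsum⟩
      obtain ⟨I, J, hIm, hJn, hcard, hne, rfl⟩ := pasm_to_stair _ M hM hsum rfl
      refine ⟨(I, J), ?_, rfl⟩
      rw [T, Finset.mem_filter, Finset.mem_product, Finset.mem_powerset, Finset.mem_powerset]
      exact ⟨⟨hIm, hJn⟩, hcard, hne⟩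
    · rintro ⟨⟨I, J⟩, hp, rfl⟩
      rw [T, Finset.mem_filter, Finset.mem_product, Finset.mem_powerset,
        Finset.mem_powerset] at hp
      obtain ⟨⟨hIm, hJn⟩, hcard, hne⟩ := hp
      exact isPASM_S hIm hJn hcard hne
  have hinj : Set.InjOn (fun p : Finset ℕ × Finset ℕ => S p.1 p.2) ↑(T m n) := by
    intro p hp q hq h
    rw [Finset.mem_coe, T, Finset.mem_filter] at hp hq
    obtain ⟨e1, e2⟩ := S_inj hp.2.1 hq.2.1 h
    exact Prod.ext_iff.2 ⟨e1, e2⟩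
  rw [hset, Set.ncard_coe_finset, Finset.card_image_of_injOn hinj, card_T m n hm hn]
end

section
/- The map sending an m×n matrix M to the n×m matrix M' defined by M'_{k,ℓ} = M_{m+1−ℓ, n+1−k} (for 1≤k≤n, 1≤ℓ≤m), i.e., the map that takes the i-th row of M, reverses the order of its entries, and uses it as column m−i+1 of M', restricts to a bijection from the set of m×n partial alternating sign matrices onto the set of n×m partial alternating sign matrices; in particular the number of m×n partial alternating sign matrices equals the number of n×m partial alternating sign matrices. -/
/-- The map `M ↦ M'` where `M'_{k,ℓ} = M_{m+1-ℓ, n+1-k}` (1-based); in 0-based terms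
`(revTranspose m n M) k l = M (m-1-l) (n-1-k)` for `k < n`, `l < m`, i.e. the `i`-th
row of `M`, with its entries reversed, becomes column `m-i+1` of `M'`. -/
def revTranspose (m n : ℕ) (M : ℕ → ℕ → ℤ) : ℕ → ℕ → ℤ :=
  fun k l => if k < n ∧ l < m then M (m - 1 - l) (n - 1 - k) else 0

lemma revTranspose_pasm {m n : ℕ} {M : ℕ → ℕ → ℤ} (h : IsPASM m n M) :
    IsPASM n m (revTranspose m n M) := by
  obtain ⟨h1, h2, h3, h4, h5, h6, h7, h8⟩ := h
  refine ⟨?_, ?_, ?_, ?_, ?_, ?_, ?_, ?_⟩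
  · intro i j hij
    simp only [revTranspose, ite_eq_right_iff, and_imp]
    intro hi hj; omega
  · intro i j hi hj
    simp only [revTranspose, if_pos (And.intro hi hj)]
    exact h2 _ _ (by omega) (by omega)
  · intro i hi
    have e : ∀ l ∈ Finset.range m, revTranspose m n M i l = M (m - 1 - l) (n - 1 - i) := by
      intro l hl
      simp only [revTranspose, if_pos (And.intro hi (Finset.mem_range.mp hl))]
    rw [Finset.sum_congr rfl e, Finset.sum_range_reflect (fun l => M l (n - 1 - i)) m]
    exact h4 _ (by omega)
  · intro j hj
    have e : ∀ k ∈ Finset.range n, revTranspose m n M k j = M (m - 1 - j) (n - 1 - k) := by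
      intro k hk
      simp only [revTranspose, if_pos (And.intro (Finset.mem_range.mp hk) hj)]
    rw [Finset.sum_congr rfl e, Finset.sum_range_reflect (fun k => M (m - 1 - j) k) n]
    exact h3 _ (by omega)
  · intro i j₁ j₂ hi hjj hj₂ hne1 hne2 hgap
    simp only [revTranspose, if_pos (And.intro hi (show j₁ < m by omega))] at hne1 ⊢
    simp only [revTranspose, if_pos (And.intro hi hj₂)] at hne2 ⊢
    have := h6 (n - 1 - i) (m - 1 - j₂) (m - 1 - j₁) (by omega) (by omega) (by omega)
      hne2 hne1 ?_
    · linarith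
    · intro i' h1' h2'
      have := hgap (m - 1 - i') (by omega) (by omega)
      simp only [revTranspose, if_pos (And.intro hi (show m - 1 - i' < m by omega))] at this
      have e : m - 1 - (m - 1 - i') = i' := by omega
      rwa [e] at this
  · intro j i₁ i₂ hj hii hi₂ hne1 hne2 hgap
    simp only [revTranspose, if_pos (And.intro (show i₁ < n by omega) hj)] at hne1 ⊢
    simp only [revTranspose, if_pos (And.intro hi₂ hj)] at hne2 ⊢
    have := h5 (m - 1 - j) (n - 1 - i₂) (n - 1 - i₁) (by omega) (by omega) (by omega)
      hne2 hne1 ?_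
    · linarith
    · intro j' h1' h2'
      have := hgap (n - 1 - j') (by omega) (by omega)
      simp only [revTranspose, if_pos (And.intro (show n - 1 - j' < n by omega) hj)] at this
      have e : n - 1 - (n - 1 - j') = j' := by omega
      rwa [e] at this
  · -- first nonzero of column of N is 1 ↔ last nonzero of row of M is 1
    intro i j hi hj hne hfirst
    simp only [revTranspose, if_pos (And.intro hi hj)] at hne ⊢
    apply h8 (m - 1 - j) (n - 1 - i) (by omega) (by omega) hne
    intro j' hj1 hj2
    have := hfirst (n - 1 - j') (by omega)
    simp only [revTranspose, if_pos (And.intro (show n - 1 - j' < n by omega) hj)] at this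
    have e : n - 1 - (n - 1 - j') = j' := by omega
    rwa [e] at this
  · -- last nonzero of row of N is 1 ↔ first nonzero of column of M is 1
    intro i j hi hj hne hlast
    simp only [revTranspose, if_pos (And.intro hi hj)] at hne ⊢
    apply h7 (m - 1 - j) (n - 1 - i) (by omega) (by omega) hne
    intro i' hi'
    have := hlast (m - 1 - i') (by omega) (by omega)
    simp only [revTranspose, if_pos (And.intro hi (show m - 1 - i' < m by omega))] at this
    have e : m - 1 - (m - 1 - i') = i' := by omega
    rwa [e] at this

lemma revTranspose_revTranspose {m n : ℕ} {M : ℕ → ℕ → ℤ}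
    (h1 : ∀ i j, m ≤ i ∨ n ≤ j → M i j = 0) :
    revTranspose n m (revTranspose m n M) = M := by
  funext i j
  simp only [revTranspose]
  by_cases h : i < m ∧ j < n
  · rw [if_pos h, if_pos (And.intro (show n - 1 - j < n by omega) (show m - 1 - i < m by omega))]
    have e1 : m - 1 - (m - 1 - i) = i := by omega
    have e2 : n - 1 - (n - 1 - j) = j := by omega
    rw [e1, e2]
  · rw [if_neg h, (h1 i j (by omega)).symm]

/-- The reverse-transpose map restricts to a bijection from the set
of `m × n` partial alternating sign matrices onto the set of `n × m` partial
alternating sign matrices; in particular the two sets have the same cardinality. -/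
theorem pasm_revTranspose_bijection (m n : ℕ) :
    Set.BijOn (revTranspose m n) {M | IsPASM m n M} {M' | IsPASM n m M'} ∧
    {M | IsPASM m n M}.ncard = {M' | IsPASM n m M'}.ncard := by
  have key : ∀ m n : ℕ, Set.BijOn (revTranspose m n) {M | IsPASM m n M} {M' | IsPASM n m M'} := by
    intro m n
    refine ⟨fun M hM => revTranspose_pasm hM, fun M hM M' hM' hEq => ?_, fun M' hM' => ?_⟩
    · calc M = revTranspose n m (revTranspose m n M) := (revTranspose_revTranspose hM.1).symm
        _ = revTranspose n m (revTranspose m n M') := by rw [hEq]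
        _ = M' := revTranspose_revTranspose hM'.1
    · exact ⟨revTranspose n m M', revTranspose_pasm hM', revTranspose_revTranspose hM'.1⟩
  refine ⟨key m n, ?_⟩
  rw [← (key m n).image_eq]
  exact (Set.ncard_image_of_injOn (key m n).injOn).symm
end

section
/- Under the bijection between (m,n)-partial fully-packed loop configurations and (m,n)-partial height-function matrices, for each 1≤i≤m and 1≤j≤n, applying the local action to the square in row i and column j of a partial fully-packed loop configuration F (the square with corner vertices v_{i−1,j−1}, v_{i−1,j}, v_{i,j−1}, v_{i,j}) corresponds to the following operation on the associated partial height-function matrix h: if the matrix obtained from h by replacing h_{i,j} with h_{i,j}+2 or h_{i,j}−2 is again an (m,n)-partial height-function matrix, the local action produces the configuration associated to that modified matrix, and otherwise the local action fixes F. -/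
/-- A configuration of edges on the grid graph `G_{m,n}`.
The first component `H` records horizontal edges: `H i j` means the edge
between `v_{i,j}` and `v_{i,j+1}` is present (meaningful for `1 ≤ i ≤ m`,
`0 ≤ j ≤ n`).  The second component `V` records vertical edges: `V i j`
means the edge between `v_{i,j}` and `v_{i+1,j}` is present (meaningful for
`0 ≤ i ≤ m`, `1 ≤ j ≤ n`). -/
abbrev GridConfig : Type := (ℕ → ℕ → Prop) × (ℕ → ℕ → Prop)

open Classical in
/-- An `(m,n)`-partial fully-packed loop configuration: a subgraph of `G_{m,n}`
containing the boundary edges `v_{0,j}v_{1,j}` for odd `j` and `v_{i,0}v_{i,1}`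
for even `i`, in which every internal vertex has degree exactly 2. -/
def IsPFPL (m n : ℕ) (F : GridConfig) : Prop :=
  -- normalization: no horizontal edges outside the graph
  (∀ i j, ¬(1 ≤ i ∧ i ≤ m ∧ j ≤ n) → ¬ F.1 i j) ∧
  -- normalization: no vertical edges outside the graph
  (∀ i j, ¬(i ≤ m ∧ 1 ≤ j ∧ j ≤ n) → ¬ F.2 i j) ∧
  -- boundary edges v_{0,j}v_{1,j} for odd j
  (∀ j, 1 ≤ j → j ≤ n → Odd j → F.2 0 j) ∧
  -- boundary edges v_{i,0}v_{i,1} for even i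
  (∀ i, 1 ≤ i → i ≤ m → Even i → F.1 i 0) ∧
  -- every internal vertex v_{i,j} (1 ≤ i ≤ m, 1 ≤ j ≤ n) has degree exactly 2
  (∀ i j, 1 ≤ i → i ≤ m → 1 ≤ j → j ≤ n →
    ((if F.1 i (j-1) then 1 else 0) + (if F.1 i j then 1 else 0) +
     (if F.2 (i-1) j then 1 else 0) + (if F.2 i j then 1 else 0) : ℕ) = 2)

/-- The bijection from `(m,n)`-partial height-function matrices to `(m,n)`-partial
fully-packed loop configurations: overlaying the matrix on the grid so that entry
`h i j` occupies the face with corners `v_{i,j}, v_{i,j+1}, v_{i+1,j}, v_{i+1,j+1}`,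
an edge is placed between the two vertices separating horizontally adjacent entries
`h i (j-1), h i j` exactly when these are `2k` and `2k+1` in some order (i.e. their
minimum is even), and between the two vertices separating vertically adjacent
entries `h (i-1) j, h i j` exactly when these are `2k-1` and `2k` in some order
(i.e. their minimum is odd). -/
def phfToPFPL (m n : ℕ) (h : ℕ → ℕ → ℤ) : GridConfig :=
  (fun i j => 1 ≤ i ∧ i ≤ m ∧ j ≤ n ∧ Odd (min (h (i-1) j) (h i j)),
   fun i j => i ≤ m ∧ 1 ≤ j ∧ j ≤ n ∧ Even (min (h i (j-1)) (h i j)))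

/-- Replace the `(i,j)` entry of a matrix by `v`. -/
def replaceEntry (h : ℕ → ℕ → ℤ) (i j : ℕ) (v : ℤ) : ℕ → ℕ → ℤ :=
  fun a b => if a = i ∧ b = j then v else h a b

/-- The condition under which the local action at the square whose corner vertices
are `v_{i,j}, v_{i,j+1}, v_{i+1,j}, v_{i+1,j+1}` (for `1 ≤ i ≤ m`, `1 ≤ j ≤ n`;
this is the square of the grid corresponding to the height-function entry `h i j`)
actually swaps edges.  Its four potential edges are top `F.1 i j`, bottom
`F.1 (i+1) j` (present in the graph only if `i < m`), left `F.2 i j`, and right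
`F.2 i (j+1)` (present in the graph only if `j < n`).
* interior square (`i < m`, `j < n`): its only edges are the two horizontal ones, or
  its only edges are the two vertical ones;
* non-corner square on the right boundary (`i < m`, `j = n`): its only edge is the
  left one, or its only edges are the two horizontal ones;
* non-corner square on the bottom boundary (`i = m`, `j < n`): its only edge is the
  top one, or its only edges are the two vertical ones;
* bottom-right corner square (`i = m`, `j = n`): its only edge is the left one, or
  its only edge is the top one. -/
def squareSwaps (m n i j : ℕ) (F : GridConfig) : Prop :=
  if i < m then
    if j < n then
      (F.1 i j ∧ F.1 (i+1) j ∧ ¬F.2 i j ∧ ¬F.2 i (j+1)) ∨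
      (¬F.1 i j ∧ ¬F.1 (i+1) j ∧ F.2 i j ∧ F.2 i (j+1))
    else
      (¬F.1 i j ∧ ¬F.1 (i+1) j ∧ F.2 i j) ∨ (F.1 i j ∧ F.1 (i+1) j ∧ ¬F.2 i j)
  else
    if j < n then
      (F.1 i j ∧ ¬F.2 i j ∧ ¬F.2 i (j+1)) ∨ (¬F.1 i j ∧ F.2 i j ∧ F.2 i (j+1))
    else
      (F.2 i j ∧ ¬F.1 i j) ∨ (F.1 i j ∧ ¬F.2 i j)

/-- The local action on the square whose corner vertices are
`v_{i,j}, v_{i,j+1}, v_{i+1,j}, v_{i+1,j+1}` (for `1 ≤ i ≤ m`, `1 ≤ j ≤ n`): if the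
square's edge configuration is one of the two special ones for its type, all of the
square's graph edges are complemented (which swaps the two special configurations);
otherwise nothing happens. -/
def localAct (m n i j : ℕ) (F : GridConfig) : GridConfig :=
  (fun a b =>
     if a = i ∧ b = j then Xor' (squareSwaps m n i j F) (F.1 i j)
     else if i < m ∧ a = i + 1 ∧ b = j then Xor' (squareSwaps m n i j F) (F.1 (i+1) j)
     else F.1 a b,
   fun a b =>
     if a = i ∧ b = j then Xor' (squareSwaps m n i j F) (F.2 i j)
     else if j < n ∧ a = i ∧ b = j + 1 then Xor' (squareSwaps m n i j F) (F.2 i (j+1))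
     else F.2 a b)

section Aux

/-- Lower bound `h a b ≥ b - a` for a partial height-function matrix. -/
lemma phf_lb1 (m n : ℕ) (h : ℕ → ℕ → ℤ) (hh : IsPHF m n h) :
    ∀ a b, a ≤ m → b ≤ n → (b : ℤ) - a ≤ h a b := by
  obtain ⟨-, -, hrow, -, hv, -⟩ := hh
  intro a
  induction a with
  | zero => intro b _ hbn; rw [hrow b hbn]; simp
  | succ a ih =>
    intro b ham hbn
    have h1 := hv a b (by omega) hbn
    have h2 := ih b (by omega) hbn
    omega

/-- Lower bound `h a b ≥ a - b` for a partial height-function matrix. -/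
lemma phf_lb2 (m n : ℕ) (h : ℕ → ℕ → ℤ) (hh : IsPHF m n h) :
    ∀ a b, a ≤ m → b ≤ n → (a : ℤ) - b ≤ h a b := by
  obtain ⟨-, -, -, hcol, -, hho⟩ := hh
  intro a b
  induction b with
  | zero => intro ham _; rw [hcol a ham]; simp
  | succ b ih =>
    intro ham hbn
    have h1 := hho a b ham (by omega)
    have h2 := ih ham (by omega)
    omega

/-- If all existing neighbours of entry `(i+1, j+1)` equal `h (i+1) (j+1) + s`
with `s = ±1`, then changing that entry by `2s` yields a PHF. -/
lemma isPHF_replace_of_nb (m n : ℕ) (h : ℕ → ℕ → ℤ) (hh : IsPHF m n h)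
    (i j : ℕ) (him : i + 1 ≤ m) (hjn : j + 1 ≤ n) (s : ℤ) (hs : s = 1 ∨ s = -1)
    (h1 : h i (j+1) = h (i+1) (j+1) + s)
    (h2 : h (i+1) j = h (i+1) (j+1) + s)
    (h3 : i + 1 < m → h (i+2) (j+1) = h (i+1) (j+1) + s)
    (h4 : j + 1 < n → h (i+1) (j+2) = h (i+1) (j+1) + s)
    (v : ℤ) (hv : v = h (i+1) (j+1) + 2*s) :
    IsPHF m n (replaceEntry h (i+1) (j+1) v) := by
  have lb1 := phf_lb1 m n h hh i (j+1) (by omega) hjn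
  have lb2 := phf_lb2 m n h hh (i+1) j him (by omega)
  obtain ⟨hnorm, hnn, hrow, hcol, hver, hhor⟩ := hh
  have hc2 : 0 ≤ h (i+1) (j+1) + 2*s := by
    rcases hs with rfl | rfl
    · have := hnn (i+1) (j+1) him hjn; omega
    · omega
  refine ⟨?_, ?_, ?_, ?_, ?_, ?_⟩
  · intro a b hab
    simp only [replaceEntry]
    split_ifs with hq
    · omega
    · exact hnorm a b hab
  · intro a b ham hbn
    simp only [replaceEntry]
    split_ifs with hq
    · omega
    · exact hnn a b ham hbn
  · intro k hk
    simp only [replaceEntry]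
    rw [if_neg (by omega)]
    exact hrow k hk
  · intro l hl
    simp only [replaceEntry]
    rw [if_neg (by omega)]
    exact hcol l hl
  · intro a b ham hbn
    simp only [replaceEntry]
    split_ifs with q1 q2 q2
    · omega
    · -- a+1 = i+1, b = j+1, so a = i
      obtain ⟨e1, rfl⟩ := q1
      have : a = i := by omega
      subst this
      rcases hs with rfl | rfl <;> omega
    · -- a = i+1, b = j+1
      obtain ⟨rfl, rfl⟩ := q2
      have := h3 (by omega)
      rw [show i+1+1 = i+2 from rfl]
      rcases hs with rfl | rfl <;> omega
    · exact hver a b ham hbn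
  · intro a b ham hbn
    simp only [replaceEntry]
    split_ifs with q1 q2 q2
    · omega
    · obtain ⟨rfl, e2⟩ := q1
      have : b = j := by omega
      subst this
      rcases hs with rfl | rfl <;> omega
    · obtain ⟨rfl, rfl⟩ := q2
      have := h4 (by omega)
      rw [show j+1+1 = j+2 from rfl]
      rcases hs with rfl | rfl <;> omega
    · exact hhor a b ham hbn

/-- Conversely, if changing entry `(i+1,j+1)` by `2s` yields a PHF then all
existing neighbours equal `h (i+1) (j+1) + s`. -/
lemma nb_of_isPHF_replace (m n : ℕ) (h : ℕ → ℕ → ℤ) (hh : IsPHF m n h)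
    (i j : ℕ) (him : i + 1 ≤ m) (hjn : j + 1 ≤ n) (s : ℤ) (hs : s = 1 ∨ s = -1)
    (v : ℤ) (hv : v = h (i+1) (j+1) + 2*s)
    (hrep : IsPHF m n (replaceEntry h (i+1) (j+1) v)) :
    h i (j+1) = h (i+1) (j+1) + s ∧ h (i+1) j = h (i+1) (j+1) + s ∧
      (i + 1 < m → h (i+2) (j+1) = h (i+1) (j+1) + s) ∧
      (j + 1 < n → h (i+1) (j+2) = h (i+1) (j+1) + s) := by
  obtain ⟨-, -, -, -, hver, hhor⟩ := hh
  obtain ⟨-, -, -, -, hver', hhor'⟩ := hrep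
  have ne1 : ¬ (i = i + 1 ∧ j + 1 = j + 1) := by omega
  have ne2 : ¬ (i + 2 = i + 1 ∧ j + 1 = j + 1) := by omega
  have ne3 : ¬ (i + 1 = i + 1 ∧ j = j + 1) := by omega
  have ne4 : ¬ (i + 1 = i + 1 ∧ j + 2 = j + 1) := by omega
  have d1 := hver i (j+1) (by omega) hjn
  have d1' := hver' i (j+1) (by omega) hjn
  simp [replaceEntry] at d1'
  have d2 := hhor (i+1) j him (by omega)
  have d2' := hhor' (i+1) j him (by omega)
  simp [replaceEntry] at d2'
  refine ⟨by rcases hs with rfl | rfl <;> omega, by rcases hs with rfl | rfl <;> omega,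
    ?_, ?_⟩
  · intro hm'
    have d3 := hver (i+1) (j+1) hm' hjn
    have d3' := hver' (i+1) (j+1) hm' hjn
    rw [show i+1+1 = i+2 from rfl] at d3
    simp [replaceEntry, show i+1+1 = i+2 from rfl] at d3'
    rcases hs with rfl | rfl <;> omega
  · intro hn'
    have d4 := hhor (i+1) (j+1) him hn'
    have d4' := hhor' (i+1) (j+1) him hn'
    rw [show j+1+1 = j+2 from rfl] at d4
    simp [replaceEntry, show j+1+1 = j+2 from rfl] at d4'
    rcases hs with rfl | rfl <;> omega

set_option maxHeartbeats 1000000 in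
/-- If the square swaps, then all existing neighbours of the entry agree. -/
lemma nb_of_swaps (m n : ℕ) (h : ℕ → ℕ → ℤ) (hh : IsPHF m n h)
    (i j : ℕ) (him : i + 1 ≤ m) (hjn : j + 1 ≤ n)
    (hsw : squareSwaps m n (i+1) (j+1) (phfToPFPL m n h)) :
    ∃ s : ℤ, (s = 1 ∨ s = -1) ∧ h i (j+1) = h (i+1) (j+1) + s ∧
      h (i+1) j = h (i+1) (j+1) + s ∧
      (i + 1 < m → h (i+2) (j+1) = h (i+1) (j+1) + s) ∧
      (j + 1 < n → h (i+1) (j+2) = h (i+1) (j+1) + s) := by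
  obtain ⟨-, -, -, -, hver, hhor⟩ := hh
  have d1 := hver i (j+1) (by omega) hjn
  have d2 := hhor (i+1) j him (by omega)
  unfold squareSwaps at hsw
  rcases lt_or_ge (i+1) m with h5 | h5
  · rw [if_pos h5] at hsw
    have d3 := hver (i+1) (j+1) h5 hjn
    rw [show i+1+1 = i+2 from rfl] at d3
    rcases lt_or_ge (j+1) n with h6 | h6
    · rw [if_pos h6] at hsw
      have d4 := hhor (i+1) (j+1) him h6
      rw [show j+1+1 = j+2 from rfl] at d4
      simp only [phfToPFPL, Nat.add_sub_cancel, show i+1+1 = i+2 from rfl, show j+1+1 = j+2 from rfl, show i+2-1 = i+1 by omega,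
        show j+2-1 = j+1 by omega, Int.odd_iff, Int.even_iff] at hsw
      exact ⟨h i (j+1) - h (i+1) (j+1), by omega, by omega, by omega,
        fun _ => by omega, fun _ => by omega⟩
    · rw [if_neg (by omega)] at hsw
      simp only [phfToPFPL, Nat.add_sub_cancel, show i+1+1 = i+2 from rfl, show j+1+1 = j+2 from rfl, show i+2-1 = i+1 by omega,
        Int.odd_iff, Int.even_iff] at hsw
      exact ⟨h i (j+1) - h (i+1) (j+1), by omega, by omega, by omega,
        fun _ => by omega, fun hn' => by omega⟩
  · rw [if_neg (by omega)] at hsw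
    rcases lt_or_ge (j+1) n with h6 | h6
    · rw [if_pos h6] at hsw
      have d4 := hhor (i+1) (j+1) him h6
      rw [show j+1+1 = j+2 from rfl] at d4
      simp only [phfToPFPL, Nat.add_sub_cancel, show i+1+1 = i+2 from rfl, show j+1+1 = j+2 from rfl, show j+2-1 = j+1 by omega,
        Int.odd_iff, Int.even_iff] at hsw
      exact ⟨h i (j+1) - h (i+1) (j+1), by omega, by omega, by omega,
        fun hm' => by omega, fun _ => by omega⟩
    · rw [if_neg (by omega)] at hsw
      simp only [phfToPFPL, Nat.add_sub_cancel, show i+1+1 = i+2 from rfl, show j+1+1 = j+2 from rfl, Int.odd_iff, Int.even_iff] at hsw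
      exact ⟨h i (j+1) - h (i+1) (j+1), by omega, by omega, by omega,
        fun hm' => by omega, fun hn' => by omega⟩

/-- If the square does not swap, the local action is the identity. -/
lemma localAct_of_not_swaps (m n i j : ℕ) (F : GridConfig)
    (hsw : ¬ squareSwaps m n i j F) : localAct m n i j F = F := by
  refine Prod.ext ?_ ?_ <;> funext a b <;> simp only [localAct]
  · split_ifs with q1 q2
    · obtain ⟨rfl, rfl⟩ := q1
      apply propext; simp [Xor', hsw]
    · obtain ⟨hm, rfl, rfl⟩ := q2
      apply propext; simp [Xor', hsw]
    · rfl
  · split_ifs with q1 q2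
    · obtain ⟨rfl, rfl⟩ := q1
      apply propext; simp [Xor', hsw]
    · obtain ⟨hn, rfl, rfl⟩ := q2
      apply propext; simp [Xor', hsw]
    · rfl

set_option maxHeartbeats 1000000 in
/-- Main computation: under the neighbour condition, the local action produces the
configuration of the modified matrix. -/
lemma localAct_eq_of_nb (m n : ℕ) (h : ℕ → ℕ → ℤ)
    (i j : ℕ) (him : i + 1 ≤ m) (hjn : j + 1 ≤ n) (s : ℤ) (hs : s = 1 ∨ s = -1)
    (h1 : h i (j+1) = h (i+1) (j+1) + s)
    (h2 : h (i+1) j = h (i+1) (j+1) + s)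
    (h3 : i + 1 < m → h (i+2) (j+1) = h (i+1) (j+1) + s)
    (h4 : j + 1 < n → h (i+1) (j+2) = h (i+1) (j+1) + s)
    (v : ℤ) (hv : v = h (i+1) (j+1) + 2*s) :
    localAct m n (i+1) (j+1) (phfToPFPL m n h) =
      phfToPFPL m n (replaceEntry h (i+1) (j+1) v) := by
  have hS : squareSwaps m n (i+1) (j+1) (phfToPFPL m n h) := by
    unfold squareSwaps
    rcases lt_or_ge (i+1) m with h5 | h5
    · rw [if_pos h5]
      have h3' := h3 h5
      rcases lt_or_ge (j+1) n with h6 | h6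
      · rw [if_pos h6]
        have h4' := h4 h6
        simp only [phfToPFPL, Nat.add_sub_cancel, show i+1+1 = i+2 from rfl, show j+1+1 = j+2 from rfl, show i+2-1 = i+1 by omega,
          show j+2-1 = j+1 by omega, Int.odd_iff, Int.even_iff]
        omega
      · rw [if_neg (by omega)]
        simp only [phfToPFPL, Nat.add_sub_cancel, show i+1+1 = i+2 from rfl, show j+1+1 = j+2 from rfl, show i+2-1 = i+1 by omega,
          Int.odd_iff, Int.even_iff]
        omega
    · rw [if_neg (by omega)]
      rcases lt_or_ge (j+1) n with h6 | h6
      · rw [if_pos h6]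
        have h4' := h4 h6
        simp only [phfToPFPL, Nat.add_sub_cancel, show i+1+1 = i+2 from rfl, show j+1+1 = j+2 from rfl, show j+2-1 = j+1 by omega,
          Int.odd_iff, Int.even_iff]
        omega
      · rw [if_neg (by omega)]
        simp only [phfToPFPL, Nat.add_sub_cancel, show i+1+1 = i+2 from rfl, show j+1+1 = j+2 from rfl, Int.odd_iff, Int.even_iff]
        omega
  refine Prod.ext ?_ ?_ <;> funext a b
  · -- horizontal edges
    simp only [localAct]
    by_cases q1 : a = i+1 ∧ b = j+1
    · obtain ⟨rfl, rfl⟩ := q1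
      rw [if_pos ⟨rfl, rfl⟩]
      apply propext
      simp only [Xor', iff_true_intro hS, true_and, not_true, and_false, false_or]
      simp [phfToPFPL, replaceEntry, Nat.add_sub_cancel, Int.odd_iff, Int.even_iff]
      rcases hs with rfl | rfl <;> omega
    · rw [if_neg q1]
      by_cases q2 : i + 1 < m ∧ a = i+1+1 ∧ b = j+1
      · obtain ⟨hm', rfl, rfl⟩ := q2
        rw [if_pos ⟨hm', rfl, rfl⟩]
        have h3' := h3 hm'
        apply propext
        simp only [Xor', iff_true_intro hS, true_and, not_true, and_false, false_or]
        simp [phfToPFPL, replaceEntry, Nat.add_sub_cancel, show i+1+1 = i+2 from rfl,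
          show i+2-1 = i+1 by omega, Int.odd_iff, Int.even_iff]
        rcases hs with rfl | rfl <;> omega
      · rw [if_neg q2]
        by_cases q3 : a = i+1+1 ∧ b = j+1
        · obtain ⟨rfl, rfl⟩ := q3
          have hm' : ¬ (i + 1 < m) := fun hm' => q2 ⟨hm', rfl, rfl⟩
          apply propext
          simp only [phfToPFPL]
          constructor
          · rintro ⟨-, hle, -, -⟩; exact absurd hle (by omega)
          · rintro ⟨-, hle, -, -⟩; exact absurd hle (by omega)
        · apply propext
          simp only [phfToPFPL, replaceEntry,
            if_neg (show ¬ (a - 1 = i + 1 ∧ b = j + 1) from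
              fun ⟨e1, e2⟩ => q3 ⟨by omega, e2⟩),
            if_neg q1]
  · -- vertical edges
    simp only [localAct]
    by_cases q1 : a = i+1 ∧ b = j+1
    · obtain ⟨rfl, rfl⟩ := q1
      rw [if_pos ⟨rfl, rfl⟩]
      apply propext
      simp only [Xor', iff_true_intro hS, true_and, not_true, and_false, false_or]
      simp [phfToPFPL, replaceEntry, Nat.add_sub_cancel, Int.odd_iff, Int.even_iff]
      rcases hs with rfl | rfl <;> omega
    · rw [if_neg q1]
      by_cases q2 : j + 1 < n ∧ a = i+1 ∧ b = j+1+1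
      · obtain ⟨hn', rfl, rfl⟩ := q2
        rw [if_pos ⟨hn', rfl, rfl⟩]
        have h4' := h4 hn'
        apply propext
        simp only [Xor', iff_true_intro hS, true_and, not_true, and_false, false_or]
        simp [phfToPFPL, replaceEntry, Nat.add_sub_cancel, show j+1+1 = j+2 from rfl,
          show j+2-1 = j+1 by omega, Int.odd_iff, Int.even_iff]
        rcases hs with rfl | rfl <;> omega
      · rw [if_neg q2]
        by_cases q3 : a = i+1 ∧ b = j+1+1
        · obtain ⟨rfl, rfl⟩ := q3
          have hn' : ¬ (j + 1 < n) := fun hn' => q2 ⟨hn', rfl, rfl⟩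
          apply propext
          simp only [phfToPFPL]
          constructor
          · rintro ⟨-, -, hle, -⟩; exact absurd hle (by omega)
          · rintro ⟨-, -, hle, -⟩; exact absurd hle (by omega)
        · apply propext
          simp only [phfToPFPL, replaceEntry,
            if_neg (show ¬ (a = i + 1 ∧ b - 1 = j + 1) from
              fun ⟨e1, e2⟩ => q3 ⟨e1, by omega⟩),
            if_neg q1]

end Aux

/-- Under the bijection between `(m,n)`-partial fully-packed loop
configurations and `(m,n)`-partial height-function matrices, for `1 ≤ i ≤ m` and
`1 ≤ j ≤ n`, applying the local action to the square of `F` corresponding to the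
entry `h i j` acts as follows: if the matrix obtained from `h` by replacing `h i j`
with `h i j + 2` or `h i j - 2` is again a partial height-function matrix, the local
action produces the configuration associated to that modified matrix; otherwise the
local action fixes `F`. -/
theorem localAct_corresponds_to_height_change (m n : ℕ) (h : ℕ → ℕ → ℤ)
    (hh : IsPHF m n h) (i j : ℕ) (hi1 : 1 ≤ i) (him : i ≤ m) (hj1 : 1 ≤ j) (hjn : j ≤ n) :
    (∀ d : ℤ, (d = 2 ∨ d = -2) →
      IsPHF m n (replaceEntry h i j (h i j + d)) →
        localAct m n i j (phfToPFPL m n h) =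
          phfToPFPL m n (replaceEntry h i j (h i j + d))) ∧
    ((¬ IsPHF m n (replaceEntry h i j (h i j + 2)) ∧
      ¬ IsPHF m n (replaceEntry h i j (h i j - 2))) →
        localAct m n i j (phfToPFPL m n h) = phfToPFPL m n h) := by
  obtain ⟨i, rfl⟩ : ∃ i', i = i' + 1 := ⟨i - 1, by omega⟩
  obtain ⟨j, rfl⟩ : ∃ j', j = j' + 1 := ⟨j - 1, by omega⟩
  constructor
  · rintro d (rfl | rfl) hrep
    · obtain ⟨n1, n2, n3, n4⟩ := nb_of_isPHF_replace m n h hh i j him hjn 1 (Or.inl rfl)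
        (h (i+1) (j+1) + 2) (by ring) hrep
      exact localAct_eq_of_nb m n h i j him hjn 1 (Or.inl rfl) n1 n2 n3 n4 _ (by ring)
    · obtain ⟨n1, n2, n3, n4⟩ := nb_of_isPHF_replace m n h hh i j him hjn (-1) (Or.inr rfl)
        (h (i+1) (j+1) + (-2)) (by ring) hrep
      exact localAct_eq_of_nb m n h i j him hjn (-1) (Or.inr rfl) n1 n2 n3 n4 _ (by ring)
  · rintro ⟨hn1, hn2⟩
    by_cases hsw : squareSwaps m n (i+1) (j+1) (phfToPFPL m n h)
    · exfalso
      obtain ⟨s, hs, n1, n2, n3, n4⟩ := nb_of_swaps m n h hh i j him hjn hsw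
      rcases hs with rfl | rfl
      · exact hn1 (isPHF_replace_of_nb m n h hh i j him hjn 1 (Or.inl rfl)
          n1 n2 n3 n4 _ (by ring))
      · exact hn2 (isPHF_replace_of_nb m n h hh i j him hjn (-1) (Or.inr rfl)
          n1 n2 n3 n4 _ (by ring))
    · exact localAct_of_not_swaps m n (i+1) (j+1) _ hsw
end
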